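/- arXiv:2107.08884 — 10 statements merged into one kernel-verified Lean document; each statement's English description precedes it below -/
import Mathlib

section
/- Lemma 2, part (i) (optimality of non-increasing transmission rates): If r* = (r*_1, …, r*_N) is an optimal rate vector for problem (P2b), then the rates are monotonically non-increasing: r*_{n+1} ≤ r*_n for every n = 1, …, N−1. -/
/-- Energy consumption of a rate vector `r` over the `N` epochs determined by the
task instants `t`, with epoch lengths `T n = t n − t (n−1)`. -/
noncomputable def energyP2b (B σ2 h : ℝ) (t : ℕ → ℝ) (N : ℕ) (r : ℕ → ℝ) : ℝ :=
  ∑ n ∈ Finset.Icc 1 N, (Real.exp (r n / B) - 1) * (σ2 / h) * (t n - t (n - 1))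

/-- A rate vector is feasible for problem (P2b): nonnegative rates satisfying the
data transmission constraints `∑_{n=1}^j r_n T_n ≥ ∑_{n=1}^j D_n` for all `j = 1, …, N`. -/
def FeasibleP2b (t D : ℕ → ℝ) (N : ℕ) (r : ℕ → ℝ) : Prop :=
  (∀ n ∈ Finset.Icc 1 N, 0 ≤ r n) ∧
  (∀ j ∈ Finset.Icc 1 N,
    ∑ n ∈ Finset.Icc 1 j, D n ≤ ∑ n ∈ Finset.Icc 1 j, r n * (t n - t (n - 1)))

/-!
If `r*_n < r*_{n+1}`, replace both rates by their time-weighted mean over epochs `n` and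
`n + 1`. This transmits the same data by `t_{n+1}` and more data by `t_n` (the early epoch got
the higher rate), so the transmission constraints stay satisfied, while the strict convexity of
`exp` makes the energy strictly smaller, contradicting optimality.
-/

open Finset

theorem Finset.sum_eq_ite_add_ite_of_support_subset {ι M : Type*} [DecidableEq ι]
    [AddCommMonoid M] {f : ι → M} {i j : ι} (hij : i ≠ j)
    (hf : Function.support f ⊆ {i, j}) (s : Finset ι) :
    ∑ k ∈ s, f k = (if i ∈ s then f i else 0) + (if j ∈ s then f j else 0) := by
  have hf_eq : f = Pi.single i (f i) + Pi.single j (f j) := by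
    funext k
    by_cases hki : k = i
    · subst hki; simp [hij]
    by_cases hkj : k = j
    · subst hkj; simp [Ne.symm hij]
    have : f k = 0 := Function.notMem_support.1 fun hk => by simpa [hki, hkj] using hf hk
    simp [hki, hkj, this]
  conv_lhs => rw [hf_eq]
  simp only [Pi.add_apply, sum_add_distrib, sum_pi_single']

theorem StrictConvexOn.map_weightedMean_mul_lt {s : Set ℝ} {f : ℝ → ℝ}
    (hf : StrictConvexOn ℝ s f) {x y a b : ℝ} (hx : x ∈ s) (hy : y ∈ s) (hxy : x ≠ y)
    (ha : 0 < a) (hb : 0 < b) :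
    f ((a * x + b * y) / (a + b)) * (a + b) < a * f x + b * f y := by
  have hab : 0 < a + b := add_pos ha hb
  have := hf.2 hx hy hxy (div_pos ha hab) (div_pos hb hab)
    (by field_simp)
  simp only [smul_eq_mul] at this
  calc f ((a * x + b * y) / (a + b)) * (a + b)
      = f (a / (a + b) * x + b / (a + b) * y) * (a + b) := by congr 2; field_simp
    _ < (a / (a + b) * f x + b / (a + b) * f y) * (a + b) := mul_lt_mul_of_pos_right this hab
    _ = a * f x + b * f y := by field_simp

noncomputable def pairMeanRate (t r : ℕ → ℝ) (n : ℕ) : ℝ :=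
  (r n * (t n - t (n - 1)) + r (n + 1) * (t (n + 1) - t n)) / (t (n + 1) - t (n - 1))

noncomputable def averageAdjacentRates (t r : ℕ → ℝ) (n : ℕ) : ℕ → ℝ :=
  Function.update (Function.update r n (pairMeanRate t r n)) (n + 1) (pairMeanRate t r n)

section AverageAdjacentRates

variable {t r : ℕ → ℝ} {n : ℕ}

theorem pairMeanRate_sub_mul_add_sub_mul (htn : t (n + 1) ≠ t (n - 1)) :
    (pairMeanRate t r n - r n) * (t n - t (n - 1))
      + (pairMeanRate t r n - r (n + 1)) * (t (n + 1) - t n) = 0 := by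
  have : t (n + 1) - t (n - 1) ≠ 0 := sub_ne_zero.2 htn
  unfold pairMeanRate
  field_simp
  ring

theorem le_pairMeanRate (hTn : 0 < t n - t (n - 1)) (hTm : 0 < t (n + 1) - t n)
    (hr : r n ≤ r (n + 1)) : r n ≤ pairMeanRate t r n := by
  rw [pairMeanRate, le_div_iff₀ (by linarith)]
  nlinarith

theorem averageAdjacentRates_apply_self : averageAdjacentRates t r n n = pairMeanRate t r n := by
  simp [averageAdjacentRates]

theorem averageAdjacentRates_apply_succ :
    averageAdjacentRates t r n (n + 1) = pairMeanRate t r n := by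
  simp [averageAdjacentRates]

theorem averageAdjacentRates_apply_of_ne {k : ℕ} (hkn : k ≠ n) (hkn' : k ≠ n + 1) :
    averageAdjacentRates t r n k = r k := by
  simp [averageAdjacentRates, hkn, hkn']

theorem support_sub_averageAdjacentRates_subset (g : ℕ → ℝ → ℝ) :
    Function.support (fun k => g k (averageAdjacentRates t r n k) - g k (r k)) ⊆ {n, n + 1} := by
  intro k hk
  by_contra hk'
  simp only [Set.mem_insert_iff, Set.mem_singleton_iff, not_or] at hk'
  simp [averageAdjacentRates_apply_of_ne hk'.1 hk'.2] at hk

theorem sum_mul_epoch_le_averageAdjacentRates (hn : 1 ≤ n) (hTn : 0 < t n - t (n - 1))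
    (hTm : 0 < t (n + 1) - t n) (hr : r n ≤ r (n + 1)) (j : ℕ) :
    ∑ k ∈ Icc 1 j, r k * (t k - t (k - 1))
      ≤ ∑ k ∈ Icc 1 j, averageAdjacentRates t r n k * (t k - t (k - 1)) := by
  have hsum := sum_eq_ite_add_ite_of_support_subset (by omega)
    (support_sub_averageAdjacentRates_subset (t := t) (r := r) (n := n)
      fun k x => x * (t k - t (k - 1)))
    (Icc 1 j)
  simp only [sum_sub_distrib, averageAdjacentRates_apply_self, averageAdjacentRates_apply_succ,
    Nat.add_sub_cancel, mem_Icc] at hsum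
  have hconserve :=
    pairMeanRate_sub_mul_add_sub_mul (r := r) (by linarith : t (n + 1) ≠ t (n - 1))
  have hgain := mul_nonneg (sub_nonneg.2 (le_pairMeanRate hTn hTm hr)) hTn.le
  -- a prefix ending at or after epoch `n + 1` also contains epoch `n`, because `1 ≤ n`
  split_ifs at hsum <;> first | omega | linarith

theorem FeasibleP2b.averageAdjacentRates {D : ℕ → ℝ} {N : ℕ} (hfeas : FeasibleP2b t D N r)
    (hn : 1 ≤ n) (hnN : n + 1 ≤ N) (hTn : 0 < t n - t (n - 1)) (hTm : 0 < t (n + 1) - t n)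
    (hr : r n ≤ r (n + 1)) : FeasibleP2b t D N (averageAdjacentRates t r n) := by
  refine ⟨fun k hk => ?_, fun j hj =>
    (hfeas.2 j hj).trans (sum_mul_epoch_le_averageAdjacentRates hn hTn hTm hr j)⟩
  have hmean : 0 ≤ pairMeanRate t r n :=
    (hfeas.1 n (mem_Icc.2 ⟨hn, by omega⟩)).trans (le_pairMeanRate hTn hTm hr)
  by_cases hkn : k = n
  · rw [hkn, averageAdjacentRates_apply_self]; exact hmean
  by_cases hkn' : k = n + 1
  · rw [hkn', averageAdjacentRates_apply_succ]; exact hmean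
  rw [averageAdjacentRates_apply_of_ne hkn hkn']
  exact hfeas.1 k hk

theorem energyP2b_averageAdjacentRates_lt {B σ2 h : ℝ} {N : ℕ} (hB : B ≠ 0) (hc : 0 < σ2 / h)
    (hn : 1 ≤ n) (hnN : n + 1 ≤ N) (hTn : 0 < t n - t (n - 1)) (hTm : 0 < t (n + 1) - t n)
    (hr : r n ≠ r (n + 1)) :
    energyP2b B σ2 h t N (averageAdjacentRates t r n) < energyP2b B σ2 h t N r := by
  have hsum := sum_eq_ite_add_ite_of_support_subset (by omega)
    (support_sub_averageAdjacentRates_subset (t := t) (r := r) (n := n)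
      fun k x => (Real.exp (x / B) - 1) * (σ2 / h) * (t k - t (k - 1)))
    (Icc 1 N)
  simp only [sum_sub_distrib, averageAdjacentRates_apply_self, averageAdjacentRates_apply_succ,
    Nat.add_sub_cancel] at hsum
  rw [if_pos (mem_Icc.2 ⟨hn, by omega⟩), if_pos (mem_Icc.2 ⟨by omega, hnN⟩)] at hsum
  have hmean : ((t n - t (n - 1)) * (r n / B) + (t (n + 1) - t n) * (r (n + 1) / B))
      / ((t n - t (n - 1)) + (t (n + 1) - t n)) = pairMeanRate t r n / B := by
    have hS : t n - t (n - 1) + (t (n + 1) - t n) = t (n + 1) - t (n - 1) := by ring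
    have : t (n + 1) - t (n - 1) ≠ 0 := by linarith
    rw [pairMeanRate, hS]
    field_simp
  have hjensen := strictConvexOn_exp.map_weightedMean_mul_lt (Set.mem_univ _) (Set.mem_univ _)
    (by rwa [Ne, div_left_inj' hB]) hTn hTm
  rw [hmean] at hjensen
  rw [← sub_neg, energyP2b, energyP2b, hsum]
  linarith [mul_lt_mul_of_pos_left hjensen hc]

end AverageAdjacentRates

theorem optimal_rates_nonincreasing_general
    (N : ℕ) (t D rstar : ℕ → ℝ) (B σ2 h : ℝ)
    (hB : 0 < B) (hσ2 : 0 < σ2) (hh : 0 < h)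
    (ht : ∀ n, n < N → t n < t (n + 1))
    (hfeas : FeasibleP2b t D N rstar)
    (hopt : ∀ r, FeasibleP2b t D N r →
      energyP2b B σ2 h t N rstar ≤ energyP2b B σ2 h t N r) :
    ∀ n, 1 ≤ n → n + 1 ≤ N → rstar (n + 1) ≤ rstar n := by
  intro n hn hnN
  by_contra! hlt
  have hTn : 0 < t n - t (n - 1) := by
    have := ht (n - 1) (by omega)
    rwa [Nat.sub_add_cancel hn, ← sub_pos] at this
  have hTm : 0 < t (n + 1) - t n := sub_pos.2 (ht n (by omega))
  exact (hopt _ (hfeas.averageAdjacentRates hn hnN hTn hTm hlt.le)).not_gt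
    (energyP2b_averageAdjacentRates_lt hB.ne' (div_pos hσ2 hh) hn hnN hTn hTm hlt.ne)

/-- Lemma 2, part (i): any optimal rate vector for problem (P2b) has monotonically
non-increasing rates: `r*_{n+1} ≤ r*_n` for every `n = 1, …, N−1`. -/
theorem optimal_rates_nonincreasing
    (N : ℕ) (t D rstar : ℕ → ℝ) (B σ2 h : ℝ)
    (hB : 0 < B) (hσ2 : 0 < σ2) (hh : 0 < h)
    (ht0 : t 0 = 0) (ht : ∀ n, n < N → t n < t (n + 1))
    (hD : ∀ n ∈ Finset.Icc 1 N, 0 ≤ D n)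
    (hfeas : FeasibleP2b t D N rstar)
    (hopt : ∀ r, FeasibleP2b t D N r →
      energyP2b B σ2 h t N rstar ≤ energyP2b B σ2 h t N r) :
    ∀ n, 1 ≤ n → n + 1 ≤ N → rstar (n + 1) ≤ rstar n :=
  optimal_rates_nonincreasing_general N t D rstar B σ2 h hB hσ2 hh ht hfeas hopt
end

section
/- Lemma 2, part (ii) (rate constancy under non-empty buffer): If r* = (r*_1, …, r*_N) is an optimal rate vector for problem (P2b) and at some instant t_j (1 ≤ j ≤ N−1) the data buffer is non-empty, i.e., ∑_{n=1}^j r*_n T_n > ∑_{n=1}^j D_n, then the rate does not change at t_j: r*_{j+1} = r*_j. -/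
open Finset Real

theorem Finset.sum_sub_sum_eq_add_of_eqOn {ι M : Type*} [AddCommGroup M] {s : Finset ι}
    {f g : ι → M} {a b : ι} (ha : a ∈ s) (hb : b ∈ s) (hab : a ≠ b)
    (h : ∀ i ∈ s, i ≠ a → i ≠ b → f i = g i) :
    ∑ i ∈ s, f i - ∑ i ∈ s, g i = (f a - g a) + (f b - g b) := by
  rw [← sum_sub_distrib]
  exact sum_eq_add_of_mem a b ha hb hab fun i hi hne => sub_eq_zero.2 (h i hi hne.1 hne.2)

theorem StrictConvexOn.add_mul_map_weightedAvg_lt {s : Set ℝ} {f : ℝ → ℝ}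
    (hf : StrictConvexOn ℝ s f) {x y a b : ℝ} (hx : x ∈ s) (hy : y ∈ s) (hxy : x ≠ y)
    (ha : 0 < a) (hb : 0 < b) :
    (a + b) * f ((a * x + b * y) / (a + b)) < a * f x + b * f y := by
  have hab : 0 < a + b := add_pos ha hb
  have key := hf.2 hx hy hxy (div_pos ha hab) (div_pos hb hab) (by field_simp)
  simp only [smul_eq_mul] at key
  calc (a + b) * f ((a * x + b * y) / (a + b))
      = (a + b) * f (a / (a + b) * x + b / (a + b) * y) := by congr 2; field_simp
    _ < (a + b) * (a / (a + b) * f x + b / (a + b) * f y) := mul_lt_mul_of_pos_left key hab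
    _ = a * f x + b * f y := by field_simp

theorem exists_mem_Ioc_mul_le {s : ℝ} (hs : 0 < s) (Δ : ℝ) :
    ∃ b ∈ Set.Ioc (0 : ℝ) 1, b * Δ ≤ s := by
  have hpos : 0 < s + |Δ| := by positivity
  refine ⟨s / (s + |Δ|), ⟨by positivity, (div_le_one hpos).2 (by simp)⟩, ?_⟩
  calc s / (s + |Δ|) * Δ ≤ s / (s + |Δ|) * |Δ| := by gcongr; exact le_abs_self Δ
    _ ≤ s := by
      rw [div_mul_eq_mul_div, div_le_iff₀ hpos]
      nlinarith [abs_nonneg Δ]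

section

variable {t : ℕ → ℝ} {N j : ℕ}

noncomputable def transmitted (t r : ℕ → ℝ) (j : ℕ) : ℝ :=
  ∑ n ∈ Icc 1 j, r n * (t n - t (n - 1))

theorem transmitted_smul_add_smul (r r' : ℕ → ℝ) (a b : ℝ) (k : ℕ) :
    transmitted t (a • r + b • r') k = a * transmitted t r k + b * transmitted t r' k := by
  simp only [transmitted, mul_sum, ← sum_add_distrib, Pi.add_apply, Pi.smul_apply, smul_eq_mul]
  exact sum_congr rfl fun n _ => by ring

theorem FeasibleP2b.smul_add_smul {D r r' : ℕ → ℝ}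
    (hr : FeasibleP2b t D N r) (hr' : ∀ n ∈ Icc 1 N, 0 ≤ r' n)
    (heq : ∀ k ≠ j, transmitted t r' k = transmitted t r k) {a b : ℝ} (ha : 0 ≤ a) (hb : 0 ≤ b)
    (hab : a + b = 1) (hj : ∑ n ∈ Icc 1 j, D n ≤ a * transmitted t r j + b * transmitted t r' j) :
    FeasibleP2b t D N (a • r + b • r') := by
  refine ⟨fun n hn => ?_, fun k hk => ?_⟩
  · have := hr.1 n hn
    have := hr' n hn
    simp only [Pi.add_apply, Pi.smul_apply, smul_eq_mul]
    positivity
  · change _ ≤ transmitted t _ k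
    rw [transmitted_smul_add_smul]
    obtain rfl | hkj := eq_or_ne k j
    · exact hj
    · rw [heq k hkj, ← add_mul, hab, one_mul]
      exact hr.2 k hk

noncomputable def equalizeRates (t r : ℕ → ℝ) (j : ℕ) : ℕ → ℝ := fun n =>
  if n = j ∨ n = j + 1 then
    (r j * (t j - t (j - 1)) + r (j + 1) * (t (j + 1) - t j)) / (t (j + 1) - t (j - 1))
  else r n

theorem equalizeRates_nonneg {r : ℕ → ℝ} (hr : ∀ n ∈ Icc 1 N, 0 ≤ r n)
    (hj : 1 ≤ j) (hjN : j + 1 ≤ N) (hT₁ : t (j - 1) ≤ t j) (hT₂ : t j ≤ t (j + 1)) :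
    ∀ n ∈ Icc 1 N, 0 ≤ equalizeRates t r j n := by
  intro n hn
  unfold equalizeRates
  split_ifs
  · have := hr j (by grind)
    have := hr (j + 1) (by grind)
    apply div_nonneg <;> nlinarith
  · exact hr n hn

theorem transmitted_equalizeRates (r : ℕ → ℝ) (hj : 1 ≤ j) (hT : t (j + 1) ≠ t (j - 1))
    {k : ℕ} (hk : k ≠ j) : transmitted t (equalizeRates t r j) k = transmitted t r k := by
  rcases lt_or_gt_of_ne hk with hkj | hjk
  · refine sum_congr rfl fun n hn => ?_
    have : ¬(n = j ∨ n = j + 1) := by grind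
    simp only [equalizeRates, if_neg this]
  · rw [← sub_eq_zero, transmitted, transmitted,
      sum_sub_sum_eq_add_of_eqOn (a := j) (b := j + 1) (by grind) (by grind) (by omega)
        fun n _ h₁ h₂ => by simp [equalizeRates, h₁, h₂]]
    have hT' : t (j + 1) - t (j - 1) ≠ 0 := sub_ne_zero.2 hT
    simp only [equalizeRates, true_or, or_true, if_true, Nat.add_sub_cancel]
    field_simp
    ring

variable {B σ2 h : ℝ}

theorem convexOn_energyP2b (hc : 0 ≤ σ2 / h) (ht : ∀ n ∈ Icc 1 N, t (n - 1) ≤ t n) :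
    ConvexOn ℝ Set.univ (energyP2b B σ2 h t N) := by
  refine ⟨convex_univ, fun r _ r' _ a b ha hb hab => ?_⟩
  simp only [energyP2b, smul_eq_mul, mul_sum, ← sum_add_distrib]
  refine sum_le_sum fun n hn => ?_
  have hexp : exp ((a * r n + b * r' n) / B) ≤ a * exp (r n / B) + b * exp (r' n / B) := by
    simpa only [smul_eq_mul, add_div, mul_div_assoc] using
      convexOn_exp.2 (Set.mem_univ (r n / B)) (Set.mem_univ (r' n / B)) ha hb hab
  have hw : 0 ≤ σ2 / h * (t n - t (n - 1)) := mul_nonneg hc (sub_nonneg.2 (ht n hn))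
  calc (exp ((a • r + b • r') n / B) - 1) * (σ2 / h) * (t n - t (n - 1))
      = (exp ((a * r n + b * r' n) / B) - 1) * (σ2 / h * (t n - t (n - 1))) := by
        simp only [Pi.add_apply, Pi.smul_apply, smul_eq_mul, mul_assoc]
    _ ≤ (a * exp (r n / B) + b * exp (r' n / B) - 1) * (σ2 / h * (t n - t (n - 1))) :=
        mul_le_mul_of_nonneg_right (by linarith) hw
    _ = _ := by linear_combination σ2 / h * (t n - t (n - 1)) * hab

theorem energyP2b_equalizeRates_lt {r : ℕ → ℝ} (hB : B ≠ 0) (hc : 0 < σ2 / h)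
    (hj : 1 ≤ j) (hjN : j + 1 ≤ N) (hT₁ : t (j - 1) < t j) (hT₂ : t j < t (j + 1))
    (hne : r j ≠ r (j + 1)) :
    energyP2b B σ2 h t N (equalizeRates t r j) < energyP2b B σ2 h t N r := by
  set T₁ := t j - t (j - 1)
  set T₂ := t (j + 1) - t j
  set m := (T₁ * r j + T₂ * r (j + 1)) / (T₁ + T₂)
  have hm : equalizeRates t r j j = m ∧ equalizeRates t r j (j + 1) = m := by
    simp only [equalizeRates, true_or, or_true, if_true, m]
    constructor <;> congr 1 <;> ring
  have hjensen : (T₁ + T₂) * exp (m / B) < T₁ * exp (r j / B) + T₂ * exp (r (j + 1) / B) := by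
    have := strictConvexOn_exp.add_mul_map_weightedAvg_lt (Set.mem_univ (r j / B))
      (Set.mem_univ (r (j + 1) / B)) (by rwa [Ne, div_left_inj' hB]) (sub_pos.2 hT₁) (sub_pos.2 hT₂)
    convert this using 3
    ring
  rw [← sub_neg, energyP2b, energyP2b,
    sum_sub_sum_eq_add_of_eqOn (a := j) (b := j + 1) (by grind) (by grind) (by omega)
      fun n _ h₁ h₂ => by simp [equalizeRates, h₁, h₂], hm.1, hm.2, Nat.add_sub_cancel]
  linear_combination mul_lt_mul_of_pos_left hjensen hc

end

theorem optimal_rate_constant_when_buffer_nonempty_general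
    (N : ℕ) (t D rstar : ℕ → ℝ) (B σ2 h : ℝ)
    (hB : 0 < B) (hσ2 : 0 < σ2) (hh : 0 < h)
    (ht : ∀ n, n < N → t n < t (n + 1))
    (hfeas : FeasibleP2b t D N rstar)
    (hopt : ∀ r, FeasibleP2b t D N r →
      energyP2b B σ2 h t N rstar ≤ energyP2b B σ2 h t N r)
    (j : ℕ) (hj1 : 1 ≤ j) (hjN : j + 1 ≤ N)
    (hbuf : ∑ n ∈ Finset.Icc 1 j, D n
      < ∑ n ∈ Finset.Icc 1 j, rstar n * (t n - t (n - 1))) :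
    rstar (j + 1) = rstar j := by
  by_contra hne
  have hmono : ∀ n ∈ Icc 1 N, t (n - 1) < t n := fun n hn => by
    simpa [Nat.sub_add_cancel (mem_Icc.1 hn).1] using ht (n - 1) (by grind)
  have hT₁ : t (j - 1) < t j := hmono j (by grind)
  have hT₂ : t j < t (j + 1) := ht j (by omega)
  have hc : 0 < σ2 / h := div_pos hσ2 hh
  set r' := equalizeRates t rstar j
  have hlt : energyP2b B σ2 h t N r' < energyP2b B σ2 h t N rstar :=
    energyP2b_equalizeRates_lt hB.ne' hc hj1 hjN hT₁ hT₂ (Ne.symm hne)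
  have hslack : 0 < transmitted t rstar j - ∑ n ∈ Icc 1 j, D n := sub_pos.2 hbuf
  obtain ⟨b, ⟨hb₀, hb₁⟩, hb⟩ :=
    exists_mem_Ioc_mul_le hslack (transmitted t rstar j - transmitted t r' j)
  have hfeas' : FeasibleP2b t D N ((1 - b) • rstar + b • r') :=
    hfeas.smul_add_smul (equalizeRates_nonneg hfeas.1 hj1 hjN hT₁.le hT₂.le)
      (fun k hk => transmitted_equalizeRates rstar hj1 (by linarith) hk)
      (sub_nonneg.2 hb₁) hb₀.le (by ring) (by linarith)
  have hconv : energyP2b B σ2 h t N ((1 - b) • rstar + b • r')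
      ≤ (1 - b) * energyP2b B σ2 h t N rstar + b * energyP2b B σ2 h t N r' :=
    (convexOn_energyP2b hc.le fun n hn => (hmono n hn).le).2 trivial trivial
      (sub_nonneg.2 hb₁) hb₀.le (by ring)
  linarith [hopt _ hfeas', mul_lt_mul_of_pos_left hlt hb₀]

/-- Lemma 2, part (ii): if the data buffer is non-empty at instant `t_j`
(i.e. `∑_{n=1}^j r*_n T_n > ∑_{n=1}^j D_n`) under an optimal rate vector for
problem (P2b), then the rate does not change at `t_j`: `r*_{j+1} = r*_j`. -/
theorem optimal_rate_constant_when_buffer_nonempty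
    (N : ℕ) (t D rstar : ℕ → ℝ) (B σ2 h : ℝ)
    (hB : 0 < B) (hσ2 : 0 < σ2) (hh : 0 < h)
    (ht0 : t 0 = 0) (ht : ∀ n, n < N → t n < t (n + 1))
    (hD : ∀ n ∈ Finset.Icc 1 N, 0 ≤ D n)
    (hfeas : FeasibleP2b t D N rstar)
    (hopt : ∀ r, FeasibleP2b t D N r →
      energyP2b B σ2 h t N rstar ≤ energyP2b B σ2 h t N r)
    (j : ℕ) (hj1 : 1 ≤ j) (hjN : j + 1 ≤ N)
    (hbuf : ∑ n ∈ Finset.Icc 1 j, D n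
      < ∑ n ∈ Finset.Icc 1 j, rstar n * (t n - t (n - 1))) :
    rstar (j + 1) = rstar j :=
  optimal_rate_constant_when_buffer_nonempty_general N t D rstar B σ2 h hB hσ2 hh ht hfeas hopt j
    hj1 hjN hbuf
end

section
/- Optimal data partition for problem (P2a) (closed form from KKT conditions): Let N ≥ 1 and, for n = 1, …, N, let a_n, b_n, d_n, β_n, c_n > 0, and let D > 0. Suppose λ* > 0 satisfies ∑_{n=1}^N [ d_n (β_n a_n b_n/(λ* d_n))^{1/(b_n+1)} − c_n d_n ] = D and that D*_n := d_n (β_n a_n b_n/(λ* d_n))^{1/(b_n+1)} − c_n d_n ≥ 0 for every n. Then (D*_1, …, D*_N) minimizes the weighted sum of classification errors ∑_{n=1}^N β_n a_n (D_n/d_n + c_n)^{−b_n} over all vectors (D_1, …, D_N) with D_n ≥ 0 for all n and ∑_{n=1}^N D_n ≤ D. -/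
/-!
For a multiplier `λ > 0`, each summand of the Lagrangian `∑ (β_n a_n (D_n/d_n + c_n)^{-b_n} + λ D_n)`
is minimized separately at the closed-form point `D*_n`: in the variable `t = D_n/d_n + c_n` it reads
`w t^{-b} + k t`, which by weighted AM–GM is at least its value at the stationary point
`t₀ = (w b / k)^{1/(b+1)}`. Since `∑ D*_n = D ≥ ∑ D_n` and `λ > 0`, the penalty terms can only favour
`D*`, so `D*` also minimizes the weighted error itself.
-/

open Finset

namespace Real

/-- Weighted AM–GM for `u^{-b}` and `u` with weights `1 : b`, whose geometric mean is `1`. -/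
lemma add_one_le_rpow_neg_add_mul {b u : ℝ} (hb : 0 ≤ b) (hu : 0 < u) :
    b + 1 ≤ u ^ (-b) + b * u := by
  have hb1 : 0 < b + 1 := by linarith
  have hamgm := geom_mean_le_arith_mean2_weighted (w₁ := 1 / (b + 1)) (w₂ := b / (b + 1))
    (by positivity) (by positivity) (rpow_pos_of_pos hu (-b)).le hu.le (by field_simp; ring)
  have hgeom : (u ^ (-b)) ^ (1 / (b + 1)) * u ^ (b / (b + 1)) = 1 := by
    rw [← rpow_mul hu.le, ← rpow_add hu, show -b * (1 / (b + 1)) + b / (b + 1) = 0 by ring,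
      rpow_zero]
  rw [hgeom] at hamgm
  have hmean : 1 / (b + 1) * u ^ (-b) + b / (b + 1) * u = (u ^ (-b) + b * u) / (b + 1) := by
    field_simp
  rwa [hmean, le_div_iff₀ hb1, one_mul] at hamgm

lemma mul_rpow_neg_add_mul_le {w k b t : ℝ} (hw : 0 < w) (hk : 0 < k) (hb : 0 < b) (ht : 0 < t) :
    w * ((w * b / k) ^ (1 / (b + 1))) ^ (-b) + k * (w * b / k) ^ (1 / (b + 1))
      ≤ w * t ^ (-b) + k * t := by
  set t₀ := (w * b / k) ^ (1 / (b + 1))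
  have ht₀ : 0 < t₀ := by positivity
  have hpow : t₀ ^ (b + 1) = w * b / k := by
    rw [← rpow_mul (by positivity : 0 ≤ w * b / k), one_div_mul_cancel (by positivity : b + 1 ≠ 0),
      rpow_one]
  -- stationarity of `w t^{-b} + k t` at `t₀`
  have hstat : k * t₀ = b * (w * t₀ ^ (-b)) := by
    rw [rpow_neg ht₀.le, show t₀ ^ b = t₀ ^ (b + 1) / t₀ by
      rw [rpow_add ht₀, rpow_one, mul_div_cancel_right₀ _ ht₀.ne'], hpow]
    field_simp
  obtain ⟨u, hu, rfl⟩ : ∃ u, 0 < u ∧ t = u * t₀ := ⟨t / t₀, by positivity, by field_simp⟩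
  have hamgm := add_one_le_rpow_neg_add_mul hb.le hu
  calc w * t₀ ^ (-b) + k * t₀ = w * t₀ ^ (-b) * (b + 1) := by rw [hstat]; ring
    _ ≤ w * t₀ ^ (-b) * (u ^ (-b) + b * u) := by gcongr
    _ = w * (u * t₀) ^ (-b) + k * (u * t₀) := by
      rw [mul_rpow hu.le ht₀.le, mul_left_comm k, hstat]; ring

end Real

lemma Finset.sum_le_sum_of_add_mul_le {ι : Type*} (s : Finset ι) (f : ι → ℝ → ℝ) {lam D : ℝ}
    (hlam : 0 ≤ lam) {x y : ι → ℝ} (hmin : ∀ i ∈ s, f i (x i) + lam * x i ≤ f i (y i) + lam * y i)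
    (hx : ∑ i ∈ s, x i = D) (hy : ∑ i ∈ s, y i ≤ D) :
    ∑ i ∈ s, f i (x i) ≤ ∑ i ∈ s, f i (y i) := by
  have hsum := sum_le_sum hmin
  rw [sum_add_distrib, sum_add_distrib, ← mul_sum, ← mul_sum, hx] at hsum
  nlinarith [mul_le_mul_of_nonneg_left hy hlam]

lemma weighted_error_add_mul_le_of_closed_form {w b d c lam s x : ℝ} (hw : 0 < w) (hb : 0 < b)
    (hd : 0 < d) (hlam : 0 < lam)
    (hs : s = d * ((w * b / (lam * d)) ^ (1 / (b + 1))) - c * d) (hx : 0 < x / d + c) :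
    w * (s / d + c) ^ (-b) + lam * s ≤ w * (x / d + c) ^ (-b) + lam * x := by
  have hst : s / d + c = (w * b / (lam * d)) ^ (1 / (b + 1)) := by
    rw [hs]; field_simp; ring
  have key := Real.mul_rpow_neg_add_mul_le hw (mul_pos hlam hd) hb hx
  rw [← hst] at key
  have hlin : ∀ y, lam * y = lam * d * (y / d + c) - lam * c * d := fun y => by field_simp; ring
  rw [hlin s, hlin x]
  linarith

theorem optimal_data_partition_closed_form_general
    (N : ℕ) (a b d β c : ℕ → ℝ) (D lam : ℝ)
    (ha : ∀ n ∈ Finset.Icc 1 N, 0 < a n)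
    (hb : ∀ n ∈ Finset.Icc 1 N, 0 < b n)
    (hd : ∀ n ∈ Finset.Icc 1 N, 0 < d n)
    (hβ : ∀ n ∈ Finset.Icc 1 N, 0 < β n)
    (hc : ∀ n ∈ Finset.Icc 1 N, 0 < c n)
    (hlam : 0 < lam)
    (Dstar : ℕ → ℝ)
    (hDstar : ∀ n ∈ Finset.Icc 1 N,
      Dstar n = d n * ((β n * a n * b n / (lam * d n)) ^ ((1 : ℝ) / (b n + 1))) - c n * d n)
    (hDstar_sum : ∑ n ∈ Finset.Icc 1 N, Dstar n = D) :
    ∀ D' : ℕ → ℝ, (∀ n ∈ Finset.Icc 1 N, 0 ≤ D' n) →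
      (∑ n ∈ Finset.Icc 1 N, D' n ≤ D) →
      ∑ n ∈ Finset.Icc 1 N, β n * a n * ((Dstar n / d n + c n) ^ (-(b n)))
        ≤ ∑ n ∈ Finset.Icc 1 N, β n * a n * ((D' n / d n + c n) ^ (-(b n))) := by
  intro D' hD' hD'_sum
  refine sum_le_sum_of_add_mul_le _ (fun n x => β n * a n * (x / d n + c n) ^ (-(b n)))
    hlam.le (fun n hn => ?_) hDstar_sum hD'_sum
  have := hd n hn
  have := hD' n hn
  have := hc n hn
  exact weighted_error_add_mul_le_of_closed_form (mul_pos (hβ n hn) (ha n hn)) (hb n hn)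
    (hd n hn) hlam (hDstar n hn) (by positivity)

/-- Optimal data partition for problem (P2a) (closed form from the KKT conditions):
if `λ* > 0` is such that the closed-form partition
`D*_n = d_n (β_n a_n b_n / (λ* d_n))^{1/(b_n+1)} − c_n d_n` is nonnegative and sums to `D`,
then it minimizes the weighted sum of classification errors
`∑ β_n a_n (D_n/d_n + c_n)^{−b_n}` over all nonnegative partitions with `∑ D_n ≤ D`. -/
theorem optimal_data_partition_closed_form
    (N : ℕ) (hN : 1 ≤ N) (a b d β c : ℕ → ℝ) (D lam : ℝ)
    (ha : ∀ n ∈ Finset.Icc 1 N, 0 < a n)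
    (hb : ∀ n ∈ Finset.Icc 1 N, 0 < b n)
    (hd : ∀ n ∈ Finset.Icc 1 N, 0 < d n)
    (hβ : ∀ n ∈ Finset.Icc 1 N, 0 < β n)
    (hc : ∀ n ∈ Finset.Icc 1 N, 0 < c n)
    (hD : 0 < D) (hlam : 0 < lam)
    (Dstar : ℕ → ℝ)
    (hDstar : ∀ n ∈ Finset.Icc 1 N,
      Dstar n = d n * ((β n * a n * b n / (lam * d n)) ^ ((1 : ℝ) / (b n + 1))) - c n * d n)
    (hDstar_nonneg : ∀ n ∈ Finset.Icc 1 N, 0 ≤ Dstar n)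
    (hDstar_sum : ∑ n ∈ Finset.Icc 1 N, Dstar n = D) :
    ∀ D' : ℕ → ℝ, (∀ n ∈ Finset.Icc 1 N, 0 ≤ D' n) →
      (∑ n ∈ Finset.Icc 1 N, D' n ≤ D) →
      ∑ n ∈ Finset.Icc 1 N, β n * a n * ((Dstar n / d n + c n) ^ (-(b n)))
        ≤ ∑ n ∈ Finset.Icc 1 N, β n * a n * ((D' n / d n + c n) ^ (-(b n))) :=
  optimal_data_partition_closed_form_general N a b d β c D lam ha hb hd hβ hc hlam Dstar hDstar
    hDstar_sum
end

section
/- Proposition 1, sufficiency (optimality of the string-pulling policy): Define indices j_0 = 0 and, recursively while j_{i−1} < N, let j_i be the largest index j ∈ {j_{i−1}+1, …, N} maximizing (∑_{n=j_{i−1}+1}^{j} D_n)/(t_j − t_{j_{i−1}}), and set ρ_i = (∑_{n=j_{i−1}+1}^{j_i} D_n)/(t_{j_i} − t_{j_{i−1}}). Let r* be the rate vector defined by r*_n = ρ_i for j_{i−1} < n ≤ j_i. Then r* satisfies the transmission constraints and minimizes the energy E among all rate vectors satisfying the transmission constraints. -/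
/-!
By the tangent-line bound for `exp`, `E(r) - E(r*)` is at least a positive multiple of
`∑ₙ exp (r*ₙ / B) (rₙ - r*ₙ) Tₙ`. The weights `exp (r*ₙ / B)` are constant on each segment and
nonincreasing from segment to segment, because maximality of `jᵢ` forces `ρᵢ₊₁ ≤ ρᵢ` (a mediant
argument). Since `r*` delivers exactly the required data by each breakpoint `jᵢ`, the partial sums
of `(rₙ - r*ₙ) Tₙ` are nonnegative at the breakpoints, and Abel summation makes the weighted sum
nonnegative. Feasibility of `r*` within a segment is again maximality of `jᵢ`: the data required up
to `k` never exceeds `ρᵢ` times the time elapsed since `jᵢ₋₁`.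
-/

open Finset Real

lemma exp_add_mul_sub_le_exp (x y : ℝ) : exp y + exp y * (x - y) ≤ exp x := by
  calc exp y + exp y * (x - y) = exp y * (x - y + 1) := by ring
    _ ≤ exp y * exp (x - y) := by gcongr; exact add_one_le_exp _
    _ = exp x := by rw [← exp_add, add_sub_cancel]

lemma div_le_div_of_add_div_add_le {a b u v : ℝ} (hu : 0 < u) (hv : 0 < v)
    (h : (a + b) / (u + v) ≤ a / u) : b / v ≤ a / u := by
  rw [div_le_div_iff₀ (add_pos hu hv) hu] at h
  rw [div_le_div_iff₀ hv hu]
  linarith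

lemma sum_Icc_succ_add_sum_Icc_succ (f : ℕ → ℝ) {a b c : ℕ} (hab : a ≤ b) (hbc : b ≤ c) :
    ∑ n ∈ Icc (a + 1) b, f n + ∑ n ∈ Icc (b + 1) c, f n = ∑ n ∈ Icc (a + 1) c, f n := by
  simp only [Icc_add_one_left_eq_Ioc]
  exact sum_Ioc_consecutive f hab hbc

lemma sum_Icc_succ_sub_pred (g : ℕ → ℝ) {a b : ℕ} (hab : a ≤ b) :
    ∑ n ∈ Icc (a + 1) b, (g n - g (n - 1)) = g b - g a := by
  induction b, hab using Nat.le_induction with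
  | base => simp
  | succ b hab ih =>
    rw [sum_Icc_succ_top (by omega), ih, Nat.add_sub_cancel]
    ring

lemma sum_Icc_eq_sum_segments (f : ℕ → ℝ) (j : ℕ → ℕ) {m : ℕ} (hj : MonotoneOn j (Set.Iic m)) :
    ∑ n ∈ Icc (j 0 + 1) (j m), f n = ∑ i ∈ Icc 1 m, ∑ n ∈ Icc (j (i - 1) + 1) (j i), f n := by
  induction m with
  | zero => simp
  | succ m ih =>
    have hj' : MonotoneOn j (Set.Iic m) := hj.mono (Set.Iic_subset_Iic.2 m.le_succ)
    rw [sum_Icc_succ_top (by omega), Nat.add_sub_cancel, ← ih hj',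
      sum_Icc_succ_add_sum_Icc_succ f (hj' (by simp) (by simp) m.zero_le)
        (hj (by simp) (by simp) m.le_succ)]

lemma exists_mem_segment (j : ℕ → ℕ) {L n : ℕ} (h0 : j 0 < n) (hL : n ≤ j L) :
    ∃ i ∈ Icc 1 L, j (i - 1) < n ∧ n ≤ j i := by
  have hex : ∃ i, n ≤ j i := ⟨L, hL⟩
  have hpos : Nat.find hex ≠ 0 := fun h => by have := Nat.find_spec hex; rw [h] at this; omega
  refine ⟨Nat.find hex, mem_Icc.2 ⟨by omega, Nat.find_min' hex hL⟩, ?_, Nat.find_spec hex⟩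
  exact lt_of_not_ge (Nat.find_min hex (by omega))

lemma le_sum_mul_sub_of_antitoneOn (c s : ℕ → ℝ) {L : ℕ} (hs0 : s 0 = 0)
    (hs : ∀ i ≤ L, 0 ≤ s i) (hc : AntitoneOn c (Set.Icc 1 L)) {m : ℕ} (hm : m ≤ L) :
    c m * s m ≤ ∑ i ∈ Icc 1 m, c i * (s i - s (i - 1)) := by
  induction m with
  | zero => simp [hs0]
  | succ m ih =>
    have hstep : 0 ≤ (c m - c (m + 1)) * s m := by
      rcases Nat.eq_zero_or_pos m with rfl | hm0
      · simp [hs0]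
      · exact mul_nonneg (sub_nonneg.2 (hc ⟨hm0, by omega⟩ ⟨by omega, hm⟩ m.le_succ))
          (hs m (by omega))
    rw [sum_Icc_succ_top (by omega), Nat.add_sub_cancel]
    linarith [ih (by omega)]

lemma sum_mul_sub_nonneg_of_antitoneOn (c s : ℕ → ℝ) {L : ℕ} (hs0 : s 0 = 0)
    (hs : ∀ i ≤ L, 0 ≤ s i) (hc : AntitoneOn c (Set.Icc 1 L)) (hcL : 0 ≤ c L) :
    0 ≤ ∑ i ∈ Icc 1 L, c i * (s i - s (i - 1)) :=
  (mul_nonneg hcL (hs L le_rfl)).trans (le_sum_mul_sub_of_antitoneOn c s hs0 hs hc le_rfl)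

lemma sum_mul_nonneg_of_eqOn_segments (j : ℕ → ℕ) {L : ℕ} (hj : MonotoneOn j (Set.Iic L))
    (c w x : ℕ → ℝ) (hw : ∀ i ∈ Icc 1 L, ∀ n, j (i - 1) < n → n ≤ j i → w n = c i)
    (hc : AntitoneOn c (Set.Icc 1 L)) (hcL : 0 ≤ c L)
    (hx : ∀ i ≤ L, 0 ≤ ∑ n ∈ Icc (j 0 + 1) (j i), x n) :
    0 ≤ ∑ n ∈ Icc (j 0 + 1) (j L), w n * x n := by
  set s : ℕ → ℝ := fun i => ∑ n ∈ Icc (j 0 + 1) (j i), x n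
  have hseg : ∀ i ∈ Icc 1 L,
      ∑ n ∈ Icc (j (i - 1) + 1) (j i), w n * x n = c i * (s i - s (i - 1)) := by
    intro i hi
    obtain ⟨hi1, hiL⟩ := mem_Icc.1 hi
    have hsplit := sum_Icc_succ_add_sum_Icc_succ x
      (hj (Set.mem_Iic.2 (by omega)) (Set.mem_Iic.2 (by omega)) (Nat.zero_le (i - 1)))
      (hj (Set.mem_Iic.2 (by omega)) (Set.mem_Iic.2 hiL) (i.sub_le 1))
    rw [show s i - s (i - 1) = ∑ n ∈ Icc (j (i - 1) + 1) (j i), x n by simp only [s]; linarith,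
      mul_sum]
    exact sum_congr rfl fun n hn => by
      rw [hw i hi n (Nat.add_one_le_iff.1 (mem_Icc.1 hn).1) (mem_Icc.1 hn).2]
  rw [sum_Icc_eq_sum_segments _ _ hj, sum_congr rfl hseg]
  exact sum_mul_sub_nonneg_of_antitoneOn c s (by simp [s]) hx hc hcL

lemma energyP2b_add_le_energyP2b {B σ2 h : ℝ} (hσh : 0 ≤ σ2 / h) {t : ℕ → ℝ} {N : ℕ}
    (ht : ∀ n ∈ Icc 1 N, t (n - 1) ≤ t n) (r₀ r : ℕ → ℝ) :
    energyP2b B σ2 h t N r₀ + σ2 / h / B *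
        ∑ n ∈ Icc 1 N, exp (r₀ n / B) * ((r n - r₀ n) * (t n - t (n - 1)))
      ≤ energyP2b B σ2 h t N r := by
  rw [energyP2b, energyP2b, mul_sum, ← sum_add_distrib]
  gcongr with n hn
  have hT : 0 ≤ σ2 / h * (t n - t (n - 1)) := mul_nonneg hσh (sub_nonneg.2 (ht n hn))
  have htangent := mul_le_mul_of_nonneg_right (exp_add_mul_sub_le_exp (r n / B) (r₀ n / B)) hT
  linear_combination htangent

lemma sum_Icc_mul_sub_of_eq_const (t r : ℕ → ℝ) {a k : ℕ} {ρ : ℝ} (hak : a ≤ k)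
    (hr : ∀ n, a < n → n ≤ k → r n = ρ) :
    ∑ n ∈ Icc (a + 1) k, r n * (t n - t (n - 1)) = ρ * (t k - t a) := by
  rw [← sum_Icc_succ_sub_pred t hak, mul_sum]
  exact sum_congr rfl fun n hn => by
    rw [hr n (Nat.add_one_le_iff.1 (mem_Icc.1 hn).1) (mem_Icc.1 hn).2]

noncomputable def segmentRate (t D : ℕ → ℝ) (j : ℕ → ℕ) (i : ℕ) : ℝ :=
  (∑ n ∈ Icc (j (i - 1) + 1) (j i), D n) / (t (j i) - t (j (i - 1)))

section StringPulling

variable {t D rstar : ℕ → ℝ} {j : ℕ → ℕ} {N L : ℕ}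

lemma segment_bounds_of_strictMonoOn (hjm : StrictMonoOn j (Set.Iic L)) (hjL : j L = N) {i : ℕ}
    (hi : i ∈ Icc 1 L) : j (i - 1) < j i ∧ j i ≤ N := by
  obtain ⟨hi1, hiL⟩ := mem_Icc.1 hi
  exact ⟨hjm (Set.mem_Iic.2 (by omega)) (Set.mem_Iic.2 hiL) (by omega),
    hjL ▸ hjm.monotoneOn (Set.mem_Iic.2 hiL) (Set.mem_Iic.2 le_rfl) hiL⟩

lemma segmentRate_nonneg (hD : ∀ n ∈ Icc 1 N, 0 ≤ D n) (htm : StrictMonoOn t (Set.Iic N))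
    (hjm : StrictMonoOn j (Set.Iic L)) (hjL : j L = N) {i : ℕ} (hi : i ∈ Icc 1 L) :
    0 ≤ segmentRate t D j i := by
  obtain ⟨hlt, hle⟩ := segment_bounds_of_strictMonoOn hjm hjL hi
  refine div_nonneg (sum_nonneg fun n hn => hD n ?_) ?_
  · obtain ⟨hn1, hnj⟩ := mem_Icc.1 hn
    exact mem_Icc.2 ⟨by omega, hnj.trans hle⟩
  · exact sub_nonneg.2 (htm (Set.mem_Iic.2 (by omega)) (Set.mem_Iic.2 hle) hlt).le

lemma segmentRate_antitoneOn (htm : StrictMonoOn t (Set.Iic N)) (hjm : StrictMonoOn j (Set.Iic L))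
    (hjL : j L = N)
    (hmax : ∀ i ∈ Icc 1 L, ∀ k, j (i - 1) < k → k ≤ N →
      (∑ n ∈ Icc (j (i - 1) + 1) k, D n) / (t k - t (j (i - 1))) ≤ segmentRate t D j i) :
    AntitoneOn (segmentRate t D j) (Set.Icc 1 L) := by
  refine antitoneOn_of_add_one_le Set.ordConnected_Icc fun i _ hi hi' => ?_
  have hi₀ : i ∈ Icc 1 L := by simpa using hi
  have hi₁ : i + 1 ∈ Icc 1 L := by simpa using hi'
  obtain ⟨hlt₀, hle₀⟩ := segment_bounds_of_strictMonoOn hjm hjL hi₀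
  obtain ⟨hlt₁, hle₁⟩ := segment_bounds_of_strictMonoOn hjm hjL hi₁
  simp only [Nat.add_sub_cancel] at hlt₁
  have h := hmax i hi₀ (j (i + 1)) (hlt₀.trans hlt₁) hle₁
  rw [← sum_Icc_succ_add_sum_Icc_succ D hlt₀.le hlt₁.le,
    show t (j (i + 1)) - t (j (i - 1)) = (t (j i) - t (j (i - 1))) + (t (j (i + 1)) - t (j i))
      by ring] at h
  have := div_le_div_of_add_div_add_le
    (sub_pos.2 (htm (Set.mem_Iic.2 (by omega)) (Set.mem_Iic.2 hle₀) hlt₀))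
    (sub_pos.2 (htm (Set.mem_Iic.2 (by omega)) (Set.mem_Iic.2 hle₁) hlt₁)) h
  simpa [segmentRate] using this

lemma sum_rate_mul_eq_sum_data (htm : StrictMonoOn t (Set.Iic N))
    (hjm : StrictMonoOn j (Set.Iic L)) (hj0 : j 0 = 0) (hjL : j L = N)
    (hrstar : ∀ i ∈ Icc 1 L, ∀ n, j (i - 1) < n → n ≤ j i → rstar n = segmentRate t D j i)
    {m : ℕ} (hm : m ≤ L) :
    ∑ n ∈ Icc 1 (j m), rstar n * (t n - t (n - 1)) = ∑ n ∈ Icc 1 (j m), D n := by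
  have hjm' : MonotoneOn j (Set.Iic m) := hjm.monotoneOn.mono (Set.Iic_subset_Iic.2 hm)
  have hsegs := fun f => sum_Icc_eq_sum_segments f j hjm'
  simp only [hj0, zero_add] at hsegs
  rw [hsegs, hsegs]
  refine sum_congr rfl fun i hi => ?_
  have hiL : i ∈ Icc 1 L := mem_Icc.2 ⟨(mem_Icc.1 hi).1, (mem_Icc.1 hi).2.trans hm⟩
  obtain ⟨hlt, hle⟩ := segment_bounds_of_strictMonoOn hjm hjL hiL
  rw [sum_Icc_mul_sub_of_eq_const t rstar hlt.le (hrstar i hiL), segmentRate,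
    div_mul_cancel₀ _ (sub_pos.2 (htm (Set.mem_Iic.2 (by omega)) (Set.mem_Iic.2 hle) hlt)).ne']

theorem feasibleP2b_of_eq_segmentRate (hD : ∀ n ∈ Icc 1 N, 0 ≤ D n)
    (htm : StrictMonoOn t (Set.Iic N)) (hjm : StrictMonoOn j (Set.Iic L)) (hj0 : j 0 = 0)
    (hjL : j L = N)
    (hmax : ∀ i ∈ Icc 1 L, ∀ k, j (i - 1) < k → k ≤ N →
      (∑ n ∈ Icc (j (i - 1) + 1) k, D n) / (t k - t (j (i - 1))) ≤ segmentRate t D j i)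
    (hrstar : ∀ i ∈ Icc 1 L, ∀ n, j (i - 1) < n → n ≤ j i → rstar n = segmentRate t D j i) :
    FeasibleP2b t D N rstar := by
  refine ⟨fun n hn => ?_, fun k hk => ?_⟩
  · obtain ⟨hn1, hnN⟩ := mem_Icc.1 hn
    obtain ⟨i, hi, hlt, hle⟩ := exists_mem_segment j (L := L) (n := n) (by omega) (by omega)
    rw [hrstar i hi n hlt hle]
    exact segmentRate_nonneg hD htm hjm hjL hi
  · obtain ⟨hk1, hkN⟩ := mem_Icc.1 hk
    obtain ⟨i, hi, hlt, hle⟩ := exists_mem_segment j (L := L) (n := k) (by omega) (by omega)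
    have hmaxk := hmax i hi k hlt hkN
    rw [div_le_iff₀ (sub_pos.2 (htm (Set.mem_Iic.2 (by omega)) (Set.mem_Iic.2 hkN) hlt))]
      at hmaxk
    have hprev := sum_rate_mul_eq_sum_data htm hjm hj0 hjL hrstar
      ((i.sub_le 1).trans (mem_Icc.1 hi).2)
    have hsplit := fun f => sum_Icc_succ_add_sum_Icc_succ f (Nat.zero_le (j (i - 1))) hlt.le
    simp only [zero_add] at hsplit
    rw [← hsplit, ← hsplit, hprev,
      sum_Icc_mul_sub_of_eq_const t rstar hlt.le fun n hn hnk => hrstar i hi n hn (hnk.trans hle)]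
    linarith

theorem energyP2b_le_of_eq_segmentRate {B σ2 h : ℝ} (hB : 0 < B) (hσ2 : 0 < σ2) (hh : 0 < h)
    (htm : StrictMonoOn t (Set.Iic N)) (hjm : StrictMonoOn j (Set.Iic L)) (hj0 : j 0 = 0)
    (hjL : j L = N)
    (hmax : ∀ i ∈ Icc 1 L, ∀ k, j (i - 1) < k → k ≤ N →
      (∑ n ∈ Icc (j (i - 1) + 1) k, D n) / (t k - t (j (i - 1))) ≤ segmentRate t D j i)
    (hrstar : ∀ i ∈ Icc 1 L, ∀ n, j (i - 1) < n → n ≤ j i → rstar n = segmentRate t D j i)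
    {r : ℕ → ℝ} (hr : FeasibleP2b t D N r) :
    energyP2b B σ2 h t N rstar ≤ energyP2b B σ2 h t N r := by
  have hσh : 0 ≤ σ2 / h := (div_pos hσ2 hh).le
  have hT : ∀ n ∈ Icc 1 N, t (n - 1) ≤ t n := fun n hn => by
    obtain ⟨hn1, hnN⟩ := mem_Icc.1 hn
    exact htm.monotoneOn (Set.mem_Iic.2 (by omega)) (Set.mem_Iic.2 hnN) (n.sub_le 1)
  have hexcess : ∀ i ≤ L, 0 ≤ ∑ n ∈ Icc (j 0 + 1) (j i), (r n - rstar n) * (t n - t (n - 1)) := by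
    intro i hi
    simp only [hj0, zero_add, sub_mul, sum_sub_distrib,
      sum_rate_mul_eq_sum_data htm hjm hj0 hjL hrstar hi, sub_nonneg]
    rcases Nat.eq_zero_or_pos (j i) with hji | hji
    · simp [hji]
    · exact hr.2 (j i) (mem_Icc.2 ⟨hji, hjL ▸ hjm.monotoneOn hi (Set.mem_Iic.2 le_rfl) hi⟩)
  have hanti : AntitoneOn (fun i => exp (segmentRate t D j i / B)) (Set.Icc 1 L) :=
    fun a ha b hb hab => exp_le_exp.2 (div_le_div_of_nonneg_right
      (segmentRate_antitoneOn htm hjm hjL hmax ha hb hab) hB.le)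
  have hfirst := sum_mul_nonneg_of_eqOn_segments j hjm.monotoneOn _ (fun n => exp (rstar n / B))
    _ (fun i hi n hn hni => by rw [hrstar i hi n hn hni]) hanti (exp_pos _).le hexcess
  rw [hj0, zero_add, hjL] at hfirst
  linarith [energyP2b_add_le_energyP2b (B := B) hσh hT rstar r,
    mul_nonneg (div_nonneg hσh hB.le) hfirst]

end StringPulling

theorem string_pulling_optimal_general
    (N : ℕ) (t D rstar : ℕ → ℝ) (B σ2 h : ℝ)
    (hB : 0 < B) (hσ2 : 0 < σ2) (hh : 0 < h)
    (ht : ∀ n, n < N → t n < t (n + 1))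
    (hD : ∀ n ∈ Finset.Icc 1 N, 0 ≤ D n)
    (L : ℕ) (j : ℕ → ℕ)
    (hj0 : j 0 = 0) (hjL : j L = N)
    (hjmem : ∀ i ∈ Finset.Icc 1 L, j (i - 1) < j i ∧ j i ≤ N)
    -- `j i` maximizes the average required rate over `(j (i−1), N]` …
    (hmax : ∀ i ∈ Finset.Icc 1 L, ∀ k, j (i - 1) < k → k ≤ N →
      (∑ n ∈ Finset.Icc (j (i - 1) + 1) k, D n) / (t k - t (j (i - 1)))
        ≤ (∑ n ∈ Finset.Icc (j (i - 1) + 1) (j i), D n) / (t (j i) - t (j (i - 1))))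
    -- the string-pulling policy: constant rate `ρ_i` in the `i`-th segment.
    (hrstar : ∀ i ∈ Finset.Icc 1 L, ∀ n, j (i - 1) < n → n ≤ j i →
      rstar n = (∑ m ∈ Finset.Icc (j (i - 1) + 1) (j i), D m) / (t (j i) - t (j (i - 1)))) :
    FeasibleP2b t D N rstar ∧
    ∀ r, FeasibleP2b t D N r →
      energyP2b B σ2 h t N rstar ≤ energyP2b B σ2 h t N r := by
  have htm : StrictMonoOn t (Set.Iic N) := strictMonoOn_Iic_of_lt_succ ht
  have hjm : StrictMonoOn j (Set.Iic L) := strictMonoOn_Iic_of_lt_succ fun i hi => by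
    simpa using (hjmem (i + 1) (mem_Icc.2 ⟨by omega, hi⟩)).1
  exact ⟨feasibleP2b_of_eq_segmentRate hD htm hjm hj0 hjL hmax hrstar,
    fun r hr => energyP2b_le_of_eq_segmentRate hB hσ2 hh htm hjm hj0 hjL hmax hrstar hr⟩

/-- Proposition 1, sufficiency (optimality of the string-pulling policy).
Let `j 0 = 0 < j 1 < ⋯ < j L = N` be the string-pulling indices: for each segment
`i`, `j i` is the largest index in `(j (i−1), N]` maximizing the average required
rate `(∑_{n = j(i−1)+1}^{k} D_n)/(t_k − t_{j(i−1)})`, and the policy `rstar`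
transmits at this maximal average rate `ρ_i` throughout the `i`-th segment.
Then `rstar` satisfies the transmission constraints and minimizes the energy
among all rate vectors satisfying them. -/
theorem string_pulling_optimal
    (N : ℕ) (hN : 1 ≤ N) (t D rstar : ℕ → ℝ) (B σ2 h : ℝ)
    (hB : 0 < B) (hσ2 : 0 < σ2) (hh : 0 < h)
    (ht0 : t 0 = 0) (ht : ∀ n, n < N → t n < t (n + 1))
    (hD : ∀ n ∈ Finset.Icc 1 N, 0 ≤ D n)
    (L : ℕ) (hL : 1 ≤ L) (j : ℕ → ℕ)
    (hj0 : j 0 = 0) (hjL : j L = N)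
    (hjmem : ∀ i ∈ Finset.Icc 1 L, j (i - 1) < j i ∧ j i ≤ N)
    -- `j i` maximizes the average required rate over `(j (i−1), N]` …
    (hmax : ∀ i ∈ Finset.Icc 1 L, ∀ k, j (i - 1) < k → k ≤ N →
      (∑ n ∈ Finset.Icc (j (i - 1) + 1) k, D n) / (t k - t (j (i - 1)))
        ≤ (∑ n ∈ Finset.Icc (j (i - 1) + 1) (j i), D n) / (t (j i) - t (j (i - 1))))
    -- … and is the largest such maximizer.
    (hmax_largest : ∀ i ∈ Finset.Icc 1 L, ∀ k, j (i - 1) < k → k ≤ N →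
      (∑ n ∈ Finset.Icc (j (i - 1) + 1) k, D n) / (t k - t (j (i - 1)))
          = (∑ n ∈ Finset.Icc (j (i - 1) + 1) (j i), D n) / (t (j i) - t (j (i - 1))) →
      k ≤ j i)
    -- the string-pulling policy: constant rate `ρ_i` in the `i`-th segment.
    (hrstar : ∀ i ∈ Finset.Icc 1 L, ∀ n, j (i - 1) < n → n ≤ j i →
      rstar n = (∑ m ∈ Finset.Icc (j (i - 1) + 1) (j i), D m) / (t (j i) - t (j (i - 1)))) :
    FeasibleP2b t D N rstar ∧
    ∀ r, FeasibleP2b t D N r →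
      energyP2b B σ2 h t N rstar ≤ energyP2b B σ2 h t N r :=
  string_pulling_optimal_general N t D rstar B σ2 h hB hσ2 hh ht hD L j hj0 hjL hjmem hmax hrstar
end

section
/- Proposition 1, necessity (first segment of any optimal policy): Let j₁ be the largest index j ∈ {1, …, N} maximizing (∑_{n=1}^j D_n)/t_j, and let ρ₁ = max_{1 ≤ j ≤ N} (∑_{n=1}^j D_n)/t_j. If r* = (r*_1, …, r*_N) is an optimal rate vector for problem (P2b), then r*_n = ρ₁ for every n = 1, …, j₁; in particular r*_1 equals the maximal cumulative average rate ρ₁. -/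
/-! Moving data between two adjacent epochs, towards their common weighted mean rate, strictly
lowers the energy by strict convexity. Moving it forward, into an epoch with a smaller rate, keeps
every constraint; moving it backward keeps them unless the earlier epoch's constraint is tight.
So an optimal schedule has nonincreasing rates, and a rate drop only happens where the constraint
is tight. If `r*_1` exceeded `ρ₁`, every constraint `j` would be slack (`r*_1 t_j > ρ₁ t_j ≥ ∑ D`),
the schedule would be constant, and the constant schedule `ρ₁` would be cheaper. Hence
`r*_n ≤ r*_1 ≤ ρ₁` on the first `j₁` epochs, while constraint `j₁` requires an average of at least
`ρ₁` there. -/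

open Finset Function

theorem Finset.sum_comp_update {ι α M : Type*} [AddCommGroup M] [DecidableEq ι] (s : Finset ι)
    (F : ι → α → M) (r : ι → α) (i : ι) (a : α) :
    ∑ m ∈ s, F m (update r i a m) = ∑ m ∈ s, F m (r m) + if i ∈ s then F i a - F i (r i) else 0 := by
  rw [← sum_ite_eq' s i (fun m => F m a - F m (r m)), ← sum_add_distrib]
  refine sum_congr rfl fun m _ => ?_
  by_cases hm : m = i
  · subst hm; simp
  · simp [hm]

theorem Finset.sum_comp_update_update {ι α M : Type*} [AddCommGroup M] [DecidableEq ι]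
    (s : Finset ι) (F : ι → α → M) (r : ι → α) {i j : ι} (hij : j ≠ i) (a b : α) :
    ∑ m ∈ s, F m (update (update r i a) j b m) = ∑ m ∈ s, F m (r m)
      + (if i ∈ s then F i a - F i (r i) else 0) + (if j ∈ s then F j b - F j (r j) else 0) := by
  rw [sum_comp_update, sum_comp_update, update_of_ne hij]

theorem sum_Icc_sub_pred (t : ℕ → ℝ) (j : ℕ) : ∑ n ∈ Icc 1 j, (t n - t (n - 1)) = t j - t 0 := by
  induction j with
  | zero => simp
  | succ j ih => rw [sum_Icc_succ_top (by omega), ih]; simp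

theorem sum_mul_sub_pred_of_eqOn {t f : ℕ → ℝ} {j : ℕ} {c : ℝ} (hf : ∀ n ∈ Icc 1 j, f n = c) :
    ∑ n ∈ Icc 1 j, f n * (t n - t (n - 1)) = c * (t j - t 0) := by
  rw [← sum_Icc_sub_pred, mul_sum]
  exact sum_congr rfl fun n hn => by rw [hf n hn]

theorem lt_of_forall_sub_pred_pos {t : ℕ → ℝ} {N : ℕ} (hT : ∀ n ∈ Icc 1 N, 0 < t n - t (n - 1))
    {j : ℕ} (hj : j ∈ Icc 1 N) : t 0 < t j := by
  rw [← sub_pos, ← sum_Icc_sub_pred]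
  exact sum_pos (fun n hn => hT n (Icc_subset_Icc_right (mem_Icc.1 hj).2 hn))
    ⟨j, right_mem_Icc.2 (mem_Icc.1 hj).1⟩

theorem exists_pos_le_one_mul_le {x s : ℝ} (hs : 0 ≤ s) (h : x ≤ 0 ∨ 0 < s) :
    ∃ l : ℝ, 0 < l ∧ l ≤ 1 ∧ l * x ≤ s := by
  by_cases hx : x ≤ 0
  · exact ⟨1, one_pos, le_rfl, by linarith⟩
  have hs' : 0 < s := h.resolve_left hx
  refine ⟨min 1 (s / x), lt_min one_pos (div_pos hs' (by linarith)), min_le_left _ _, ?_⟩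
  calc min 1 (s / x) * x ≤ s / x * x := mul_le_mul_of_nonneg_right (min_le_right _ _) (by linarith)
    _ = s := div_mul_cancel₀ _ (by linarith)

theorem StrictConvexOn.mul_add_mul_lt_of_toward_mean {φ : ℝ → ℝ}
    (hφ : StrictConvexOn ℝ (Set.Ici 0) φ) {a b m T T' l : ℝ} (ha : 0 ≤ a) (hb : 0 ≤ b)
    (hab : a ≠ b) (hT : 0 < T) (hT' : 0 < T') (hm : m * (T + T') = a * T + b * T') (hl : 0 < l)
    (hl1 : l ≤ 1) :
    φ (a + l * (m - a)) * T + φ (b + l * (m - b)) * T' < φ a * T + φ b * T' := by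
  have hTT : 0 < T + T' := by positivity
  have hm' : m = T / (T + T') * a + T' / (T + T') * b := by
    field_simp; linarith
  have hm0 : 0 ≤ m := by rw [hm']; positivity
  have hmean : φ m * (T + T') < φ a * T + φ b * T' := by
    have hconv := hφ.2 ha hb hab (div_pos hT hTT) (div_pos hT' hTT) (by field_simp)
    simp only [smul_eq_mul, ← hm'] at hconv
    calc φ m * (T + T') < (T / (T + T') * φ a + T' / (T + T') * φ b) * (T + T') :=
          mul_lt_mul_of_pos_right hconv hTT
      _ = φ a * T + φ b * T' := by field_simp
  have hmix : ∀ x, 0 ≤ x → φ (x + l * (m - x)) ≤ (1 - l) * φ x + l * φ m := fun x hx => by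
    rw [show x + l * (m - x) = (1 - l) • x + l • m by simp only [smul_eq_mul]; ring]
    exact hφ.convexOn.2 hx hm0 (sub_nonneg.2 hl1) hl.le (sub_add_cancel 1 l)
  nlinarith [hmix a ha, hmix b hb]

theorem strictConvexOn_exp_div_sub_one_mul {B κ : ℝ} (hB : 0 < B) (hκ : 0 < κ) :
    StrictConvexOn ℝ Set.univ fun x => (Real.exp (x / B) - 1) * κ := by
  refine ⟨convex_univ, fun x _ y _ hxy a b ha hb hab => ?_⟩
  have hexp := strictConvexOn_exp.2 (Set.mem_univ (x / B)) (Set.mem_univ (y / B))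
    (fun h => hxy (by rwa [div_left_inj' hB.ne'] at h)) ha hb hab
  simp only [smul_eq_mul] at hexp ⊢
  rw [show (a * x + b * y) / B = a * (x / B) + b * (y / B) by ring]
  nlinarith

theorem strictMono_exp_div_sub_one_mul {B κ : ℝ} (hB : 0 < B) (hκ : 0 < κ) :
    StrictMono fun x => (Real.exp (x / B) - 1) * κ := fun x y hxy => by
  have := Real.exp_lt_exp.2 (div_lt_div_of_pos_right hxy hB)
  simp only
  nlinarith

def delivered (t r : ℕ → ℝ) (j : ℕ) : ℝ :=
  ∑ n ∈ Icc 1 j, r n * (t n - t (n - 1))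

def weightedCost (φ : ℝ → ℝ) (t : ℕ → ℝ) (N : ℕ) (r : ℕ → ℝ) : ℝ :=
  ∑ n ∈ Icc 1 N, φ (r n) * (t n - t (n - 1))

section Schedule

variable {φ : ℝ → ℝ} {t D r : ℕ → ℝ} {N : ℕ}

theorem eqOn_of_le_of_le_delivered (hT : ∀ n ∈ Icc 1 N, 0 < t n - t (n - 1)) {j : ℕ} {ρ : ℝ}
    (hjN : j ≤ N) (hle : ∀ n ∈ Icc 1 j, r n ≤ ρ) (hsum : ρ * (t j - t 0) ≤ delivered t r j) :
    ∀ n ∈ Icc 1 j, r n = ρ := by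
  have hTj : ∀ n ∈ Icc 1 j, 0 < t n - t (n - 1) := fun n hn => hT n (Icc_subset_Icc_right hjN hn)
  have hterm : ∀ n ∈ Icc 1 j, r n * (t n - t (n - 1)) ≤ ρ * (t n - t (n - 1)) :=
    fun n hn => mul_le_mul_of_nonneg_right (hle n hn) (hTj n hn).le
  have heq : delivered t r j = ∑ n ∈ Icc 1 j, ρ * (t n - t (n - 1)) := by
    refine le_antisymm (sum_le_sum hterm) ?_
    rwa [← mul_sum, sum_Icc_sub_pred]
  intro n hn
  exact mul_right_cancel₀ (hTj n hn).ne' ((sum_eq_sum_iff_of_le hterm).1 heq n hn)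

theorem FeasibleP2b.update_update (hr : FeasibleP2b t D N r) {n : ℕ} (hn : 1 ≤ n) {a b : ℝ}
    (ha : 0 ≤ a) (hb : 0 ≤ b)
    (hbal : a * (t n - t (n - 1)) + b * (t (n + 1) - t n)
      = r n * (t n - t (n - 1)) + r (n + 1) * (t (n + 1) - t n))
    (hDn : ∑ k ∈ Icc 1 n, D k ≤ delivered t r n + (a - r n) * (t n - t (n - 1))) :
    FeasibleP2b t D N (update (update r n a) (n + 1) b) := by
  obtain ⟨hr0, hrD⟩ := hr
  refine ⟨fun k hk => ?_, fun j hj => ?_⟩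
  · simp only [update_apply]
    split_ifs
    exacts [hb, ha, hr0 k hk]
  rw [sum_comp_update_update _ (fun k x => x * (t k - t (k - 1))) r (by omega), Nat.add_sub_cancel]
  rcases lt_trichotomy j n with hjn | rfl | hjn
  · rw [if_neg (by simp; omega), if_neg (by simp; omega)]
    linarith [hrD j hj]
  · rw [if_pos (by simp; omega), if_neg (by simp)]
    rw [delivered] at hDn
    linarith
  · rw [if_pos (by simp; omega), if_pos (by simp; omega)]
    linarith [hrD j hj]

theorem exists_feasibleP2b_weightedCost_lt (hφ : StrictConvexOn ℝ (Set.Ici 0) φ)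
    (hT : ∀ n ∈ Icc 1 N, 0 < t n - t (n - 1)) (hr : FeasibleP2b t D N r) {n : ℕ} (hn : 1 ≤ n)
    (hnN : n + 1 ≤ N) (hne : r n ≠ r (n + 1))
    (hroom : r n < r (n + 1) ∨ ∑ k ∈ Icc 1 n, D k < delivered t r n) :
    ∃ q, FeasibleP2b t D N q ∧ weightedCost φ t N q < weightedCost φ t N r := by
  set T := t n - t (n - 1)
  set T' := t (n + 1) - t n
  have hT0 : 0 < T := hT n (mem_Icc.2 ⟨hn, by omega⟩)
  have hT1 : 0 < T' := by
    have := hT (n + 1) (mem_Icc.2 ⟨by omega, hnN⟩)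
    rwa [Nat.add_sub_cancel] at this
  set a := r n
  set b := r (n + 1)
  have ha : 0 ≤ a := hr.1 n (mem_Icc.2 ⟨hn, by omega⟩)
  have hb : 0 ≤ b := hr.1 (n + 1) (mem_Icc.2 ⟨by omega, hnN⟩)
  set m := (a * T + b * T') / (T + T')
  have hm : m * (T + T') = a * T + b * T' := div_mul_cancel₀ _ (by positivity)
  have hslack : 0 ≤ delivered t r n - ∑ k ∈ Icc 1 n, D k :=
    sub_nonneg.2 (hr.2 n (mem_Icc.2 ⟨hn, by omega⟩))
  have ham : a < b → a ≤ m := fun hab =>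
    le_of_mul_le_mul_right (by rw [hm]; nlinarith) (by positivity : 0 < T + T')
  obtain ⟨l, hl0, hl1, hl⟩ := exists_pos_le_one_mul_le (x := (a - m) * T) hslack <| hroom.imp
    (fun hab => mul_nonpos_of_nonpos_of_nonneg (sub_nonpos.2 (ham hab)) hT0.le) sub_pos.2
  have hmix : ∀ x, 0 ≤ x → 0 ≤ x + l * (m - x) := fun x hx => by
    nlinarith [show 0 ≤ m by positivity]
  refine ⟨_, hr.update_update hn (hmix a ha) (hmix b hb) (by linear_combination l * hm)
    (by linarith), ?_⟩
  unfold weightedCost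
  rw [sum_comp_update_update _ (fun k x => φ x * (t k - t (k - 1))) r (by omega),
    Nat.add_sub_cancel, if_pos (by simp; omega), if_pos (by simp; omega)]
  linarith [hφ.mul_add_mul_lt_of_toward_mean ha hb hne hT0 hT1 hm hl0 hl1]

theorem IsMinOn.antitoneOn_of_feasibleP2b (hφ : StrictConvexOn ℝ (Set.Ici 0) φ)
    (hT : ∀ n ∈ Icc 1 N, 0 < t n - t (n - 1)) (hr : FeasibleP2b t D N r)
    (hmin : IsMinOn (weightedCost φ t N) {q | FeasibleP2b t D N q} r) :
    AntitoneOn r (Set.Icc 1 N) := by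
  refine antitoneOn_of_succ_le Set.ordConnected_Icc fun n _ hn hsn => ?_
  rw [Order.succ_eq_add_one] at hsn ⊢
  by_contra! hlt
  obtain ⟨q, hq, hcost⟩ := exists_feasibleP2b_weightedCost_lt hφ hT hr hn.1 hsn.2 hlt.ne (.inl hlt)
  exact (isMinOn_iff.1 hmin q hq).not_gt hcost

theorem IsMinOn.delivered_le_of_succ_lt (hφ : StrictConvexOn ℝ (Set.Ici 0) φ)
    (hT : ∀ n ∈ Icc 1 N, 0 < t n - t (n - 1)) (hr : FeasibleP2b t D N r)
    (hmin : IsMinOn (weightedCost φ t N) {q | FeasibleP2b t D N q} r) {n : ℕ} (hn : 1 ≤ n)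
    (hnN : n + 1 ≤ N) (hlt : r (n + 1) < r n) : delivered t r n ≤ ∑ k ∈ Icc 1 n, D k := by
  by_contra! hslack
  obtain ⟨q, hq, hcost⟩ :=
    exists_feasibleP2b_weightedCost_lt hφ hT hr hn hnN hlt.ne' (.inr hslack)
  exact (isMinOn_iff.1 hmin q hq).not_gt hcost

theorem IsMinOn.forall_eq_of_lt_first (hφ : StrictConvexOn ℝ (Set.Ici 0) φ)
    (hT : ∀ n ∈ Icc 1 N, 0 < t n - t (n - 1)) (hr : FeasibleP2b t D N r)
    (hmin : IsMinOn (weightedCost φ t N) {q | FeasibleP2b t D N q} r) (ht0 : t 0 = 0) {ρ : ℝ}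
    (hρ : ∀ j ∈ Icc 1 N, ∑ n ∈ Icc 1 j, D n ≤ ρ * t j) (hρr : ρ < r 1) :
    ∀ n ∈ Icc 1 N, r n = r 1 := by
  have hanti := hmin.antitoneOn_of_feasibleP2b hφ hT hr
  suffices ∀ k, 1 ≤ k → k ≤ N → ∀ n ∈ Icc 1 k, r n = r 1 from
    fun n hn => this N ((mem_Icc.1 hn).1.trans (mem_Icc.1 hn).2) le_rfl n hn
  intro k hk
  induction k, hk using Nat.le_induction with
  | base => intro _ n hn; rw [Icc_self, mem_singleton] at hn; rw [hn]
  | succ k hk ih =>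
    intro hkN n hn
    obtain hn | rfl : n ∈ Icc 1 k ∨ n = k + 1 := by rw [mem_Icc] at *; omega
    · exact ih (by omega) n hn
    have hk' : k ∈ Icc 1 N := mem_Icc.2 ⟨hk, by omega⟩
    have hrk : r k = r 1 := ih (by omega) k (right_mem_Icc.2 hk)
    refine le_antisymm ?_ (not_lt.1 fun hlt => ?_)
    · exact hrk ▸ hanti (coe_Icc 1 N ▸ hk') (Set.mem_Icc.2 ⟨by omega, hkN⟩) (by omega)
    have htight := hmin.delivered_le_of_succ_lt hφ hT hr hk hkN (hrk ▸ hlt)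
    rw [delivered, sum_mul_sub_pred_of_eqOn (ih (by omega)), ht0, sub_zero] at htight
    nlinarith [hρ k hk', ht0 ▸ lt_of_forall_sub_pred_pos hT hk']

theorem IsMinOn.le_of_forall_le_mul (hφ : StrictConvexOn ℝ (Set.Ici 0) φ)
    (hT : ∀ n ∈ Icc 1 N, 0 < t n - t (n - 1)) (hr : FeasibleP2b t D N r)
    (hmin : IsMinOn (weightedCost φ t N) {q | FeasibleP2b t D N q} r)
    (hmono : StrictMonoOn φ (Set.Ici 0)) (ht0 : t 0 = 0)
    {ρ : ℝ} (hρ0 : 0 ≤ ρ) (hρ : ∀ j ∈ Icc 1 N, ∑ n ∈ Icc 1 j, D n ≤ ρ * t j) :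
    ∀ n ∈ Icc 1 N, r n ≤ ρ := by
  intro n hn
  have hN : 1 ≤ N := (mem_Icc.1 hn).1.trans (mem_Icc.1 hn).2
  have hrn : r n ≤ r 1 := hmin.antitoneOn_of_feasibleP2b hφ hT hr
    (Set.mem_Icc.2 ⟨le_rfl, hN⟩) (coe_Icc 1 N ▸ hn) (mem_Icc.1 hn).1
  refine hrn.trans (not_lt.1 fun hρr => ?_)
  have hconst := hmin.forall_eq_of_lt_first hφ hT hr ht0 hρ hρr
  have hq : FeasibleP2b t D N fun _ => ρ := by
    refine ⟨fun _ _ => hρ0, fun j hj => ?_⟩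
    rw [sum_mul_sub_pred_of_eqOn fun _ _ => rfl, ht0, sub_zero]
    exact hρ j hj
  have hcost := isMinOn_iff.1 hmin _ hq
  rw [weightedCost, weightedCost, sum_mul_sub_pred_of_eqOn (f := fun n => φ (r n))
    (fun m hm => congrArg φ (hconst m hm)), sum_mul_sub_pred_of_eqOn fun _ _ => rfl,
    ht0, sub_zero] at hcost
  have hφlt : φ ρ < φ (r 1) := hmono (Set.mem_Ici.2 hρ0) (Set.mem_Ici.2 (hρ0.trans hρr.le)) hρr
  nlinarith [ht0 ▸ lt_of_forall_sub_pred_pos hT (mem_Icc.2 ⟨hN, le_rfl⟩)]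

end Schedule

theorem optimal_first_segment_general
    (N : ℕ) (t D rstar : ℕ → ℝ) (B σ2 h : ℝ)
    (hB : 0 < B) (hσ2 : 0 < σ2) (hh : 0 < h)
    (ht0 : t 0 = 0) (ht : ∀ n, n < N → t n < t (n + 1))
    (hD : ∀ n ∈ Finset.Icc 1 N, 0 ≤ D n)
    (j1 : ℕ) (hj1 : j1 ∈ Finset.Icc 1 N) (ρ1 : ℝ)
    (hρ1 : ρ1 = (∑ n ∈ Finset.Icc 1 j1, D n) / t j1)
    (hmax : ∀ j ∈ Finset.Icc 1 N, (∑ n ∈ Finset.Icc 1 j, D n) / t j ≤ ρ1)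
    (hfeas : FeasibleP2b t D N rstar)
    (hopt : ∀ r, FeasibleP2b t D N r →
      energyP2b B σ2 h t N rstar ≤ energyP2b B σ2 h t N r) :
    ∀ n ∈ Finset.Icc 1 j1, rstar n = ρ1 := by
  have hκ : 0 < σ2 / h := div_pos hσ2 hh
  have hT : ∀ n ∈ Icc 1 N, 0 < t n - t (n - 1) := fun n hn => by
    have := ht (n - 1) (by simp at hn; omega)
    rw [Nat.sub_add_cancel (mem_Icc.1 hn).1] at this
    linarith
  have htpos : ∀ j ∈ Icc 1 N, 0 < t j := fun j hj => ht0 ▸ lt_of_forall_sub_pred_pos hT hj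
  have hj1N := (mem_Icc.1 hj1).2
  have hSj1 : ∑ n ∈ Icc 1 j1, D n = ρ1 * t j1 := by rw [hρ1, div_mul_cancel₀ _ (htpos j1 hj1).ne']
  have hρ0 : 0 ≤ ρ1 := hρ1 ▸ div_nonneg
    (sum_nonneg fun n hn => hD n (Icc_subset_Icc_right hj1N hn)) (htpos j1 hj1).le
  have hρ : ∀ j ∈ Icc 1 N, ∑ n ∈ Icc 1 j, D n ≤ ρ1 * t j :=
    fun j hj => (div_le_iff₀ (htpos j hj)).1 (hmax j hj)
  have hle := IsMinOn.le_of_forall_le_mul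
    ((strictConvexOn_exp_div_sub_one_mul hB hκ).subset (Set.subset_univ _) (convex_Ici 0)) hT
    hfeas (isMinOn_iff.2 hopt) ((strictMono_exp_div_sub_one_mul hB hκ).strictMonoOn _) ht0 hρ0 hρ
  refine eqOn_of_le_of_le_delivered hT hj1N (fun n hn => hle n (Icc_subset_Icc_right hj1N hn)) ?_
  rw [ht0, sub_zero, ← hSj1]
  exact hfeas.2 j1 hj1

/-- Proposition 1, necessity (first segment of any optimal policy).
Let `j₁` be the largest index `j ∈ {1, …, N}` maximizing the cumulative average
rate `(∑_{n=1}^j D_n)/t_j`, with maximal value `ρ₁`. Then any optimal rate vector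
for problem (P2b) transmits at rate `ρ₁` throughout the first `j₁` epochs. -/
theorem optimal_first_segment
    (N : ℕ) (hN : 1 ≤ N) (t D rstar : ℕ → ℝ) (B σ2 h : ℝ)
    (hB : 0 < B) (hσ2 : 0 < σ2) (hh : 0 < h)
    (ht0 : t 0 = 0) (ht : ∀ n, n < N → t n < t (n + 1))
    (hD : ∀ n ∈ Finset.Icc 1 N, 0 ≤ D n)
    (j1 : ℕ) (hj1 : j1 ∈ Finset.Icc 1 N) (ρ1 : ℝ)
    (hρ1 : ρ1 = (∑ n ∈ Finset.Icc 1 j1, D n) / t j1)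
    (hmax : ∀ j ∈ Finset.Icc 1 N, (∑ n ∈ Finset.Icc 1 j, D n) / t j ≤ ρ1)
    (hmax_largest : ∀ j ∈ Finset.Icc 1 N,
      (∑ n ∈ Finset.Icc 1 j, D n) / t j = ρ1 → j ≤ j1)
    (hfeas : FeasibleP2b t D N rstar)
    (hopt : ∀ r, FeasibleP2b t D N r →
      energyP2b B σ2 h t N rstar ≤ energyP2b B σ2 h t N r) :
    ∀ n ∈ Finset.Icc 1 j1, rstar n = ρ1 :=
  optimal_first_segment_general N t D rstar B σ2 h hB hσ2 hh ht0 ht hD j1 hj1 ρ1 hρ1 hmax hfeas hopt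
end

section
/- Non-increasing rates also hold after objectives merging: If (D*, r*) is an optimal solution of the merged problem (P3) with weight α > 0, then the optimal rates are monotonically non-increasing: r*_{n+1} ≤ r*_n for every n = 1, …, N−1. -/
/-!
If `r*_n < r*_{n+1}`, replace both rates by their mean weighted with the epoch lengths. The
data delivered by the end of epoch `n` goes up and by the end of every later epoch is
unchanged, so the schedule stays feasible. By strict convexity of `exp`, the energy strictly
decreases, and the error terms do not depend on the rates, so `(D*, r*)` was not optimal.
-/

/-- The merged objective of problem (P3): the weighted total transmission energy plus
the weighted sum of classification errors. -/
noncomputable def mergedObjective (N : ℕ) (t : ℕ → ℝ) (B σ2 h α : ℝ)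
    (a b d β c : ℕ → ℝ) (Dv r : ℕ → ℝ) : ℝ :=
  α * ∑ n ∈ Finset.Icc 1 N, (Real.exp (r n / B) - 1) * (σ2 / h) * (t n - t (n - 1))
    + ∑ n ∈ Finset.Icc 1 N, β n * a n * ((Dv n / d n + c n) ^ (-(b n)))

/-- Feasibility for problem (P3): nonnegative data partition and rates, the
transmission constraints, and the total data budget. -/
def FeasibleP3 (N : ℕ) (t : ℕ → ℝ) (D : ℝ) (Dv r : ℕ → ℝ) : Prop :=
  (∀ n ∈ Finset.Icc 1 N, 0 ≤ Dv n) ∧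
  (∀ n ∈ Finset.Icc 1 N, 0 ≤ r n) ∧
  (∀ j ∈ Finset.Icc 1 N,
    ∑ n ∈ Finset.Icc 1 j, Dv n ≤ ∑ n ∈ Finset.Icc 1 j, r n * (t n - t (n - 1))) ∧
  (∑ n ∈ Finset.Icc 1 N, Dv n ≤ D)

namespace Finset

variable {ι M : Type*} [AddCommGroup M] [PartialOrder M] [IsOrderedAddMonoid M]
  {s : Finset ι} {f g : ι → M} {i j : ι}

theorem sum_le_sum_of_le_of_add_eq (hij : i ≠ j) (hs : j ∈ s → i ∈ s)
    (hfg : ∀ k, k ≠ i → k ≠ j → f k = g k) (hi : f i ≤ g i)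
    (hsum : f i + f j = g i + g j) :
    ∑ k ∈ s, f k ≤ ∑ k ∈ s, g k := by
  rw [← sub_nonneg, ← sum_sub_distrib]
  by_cases hjs : j ∈ s
  · rw [sum_eq_add_of_mem i j (hs hjs) hjs hij
      fun k _ hk ↦ sub_eq_zero.2 (hfg k hk.1 hk.2).symm]
    exact (by rw [sub_add_sub_comm, hsum, sub_self] : g i - f i + (g j - f j) = 0).ge
  by_cases his : i ∈ s
  · rw [sum_eq_single_of_mem i his
      fun k hk hki ↦ sub_eq_zero.2 (hfg k hki (ne_of_mem_of_not_mem hk hjs)).symm]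
    exact sub_nonneg.2 hi
  · exact (sum_eq_zero fun k hk ↦ sub_eq_zero.2
      (hfg k (ne_of_mem_of_not_mem hk his) (ne_of_mem_of_not_mem hk hjs)).symm).ge

theorem sum_lt_sum_of_add_lt (hij : i ≠ j) (hi : i ∈ s) (hj : j ∈ s)
    (hfg : ∀ k, k ≠ i → k ≠ j → f k = g k) (hsum : f i + f j < g i + g j) :
    ∑ k ∈ s, f k < ∑ k ∈ s, g k := by
  rw [← sub_pos, ← sum_sub_distrib, sum_eq_add_of_mem i j hi hj hij
    fun k _ hk ↦ sub_eq_zero.2 (hfg k hk.1 hk.2).symm, sub_add_sub_comm]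
  exact sub_pos.2 hsum

end Finset

theorem StrictConvexOn.mul_map_div_lt {f : ℝ → ℝ} (hf : StrictConvexOn ℝ Set.univ f)
    {x y u v : ℝ} (hu : 0 < u) (hv : 0 < v) (hxy : x ≠ y) :
    (u + v) * f ((x * u + y * v) / (u + v)) < f x * u + f y * v := by
  have huv : 0 < u + v := add_pos hu hv
  have h := hf.2 trivial trivial hxy (div_pos hu huv) (div_pos hv huv) (by field_simp)
  simp only [smul_eq_mul] at h
  have hpt : u / (u + v) * x + v / (u + v) * y = (x * u + y * v) / (u + v) := by
    field_simp
  have hval : (u + v) * (u / (u + v) * f x + v / (u + v) * f y) = f x * u + f y * v := by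
    field_simp
  simpa only [hpt, hval] using mul_lt_mul_of_pos_left h huv

def epochLength (t : ℕ → ℝ) (k : ℕ) : ℝ := t k - t (k - 1)

theorem epochLength_pos {N k : ℕ} {t : ℕ → ℝ} (ht : ∀ n, n < N → t n < t (n + 1))
    (hk : 1 ≤ k) (hkN : k ≤ N) : 0 < epochLength t k := by
  obtain ⟨m, rfl⟩ := Nat.exists_eq_add_of_le' hk
  simpa [epochLength] using ht m (by omega)

noncomputable def averageAdjacent (r w : ℕ → ℝ) (n : ℕ) : ℕ → ℝ := fun k ↦
  if k = n ∨ k = n + 1 then (r n * w n + r (n + 1) * w (n + 1)) / (w n + w (n + 1)) else r k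

section averageAdjacent

variable {r w : ℕ → ℝ} {n : ℕ}

theorem averageAdjacent_of_ne {k : ℕ} (hkn : k ≠ n) (hkn' : k ≠ n + 1) :
    averageAdjacent r w n k = r k := by
  simp [averageAdjacent, hkn, hkn']

theorem averageAdjacent_succ : averageAdjacent r w n (n + 1) = averageAdjacent r w n n := by
  simp [averageAdjacent]

theorem le_averageAdjacent_self (hw : 0 ≤ w (n + 1)) (hw' : 0 < w n + w (n + 1))
    (hr : r n ≤ r (n + 1)) : r n ≤ averageAdjacent r w n n := by
  simp only [averageAdjacent, true_or, if_true]
  rw [le_div_iff₀ hw']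
  nlinarith

theorem averageAdjacent_mul_add (hw : w n + w (n + 1) ≠ 0) :
    averageAdjacent r w n n * w n + averageAdjacent r w n (n + 1) * w (n + 1)
      = r n * w n + r (n + 1) * w (n + 1) := by
  rw [averageAdjacent_succ, ← mul_add]
  simp only [averageAdjacent, true_or, if_true]
  exact div_mul_cancel₀ _ hw

end averageAdjacent

theorem FeasibleP3.averageAdjacent {N n : ℕ} {t : ℕ → ℝ} {D : ℝ} {Dv r : ℕ → ℝ}
    (hfeas : FeasibleP3 N t D Dv r) (hn : 1 ≤ n) (hT : 0 < epochLength t n)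
    (hT' : 0 < epochLength t (n + 1)) (hr : r n ≤ r (n + 1)) :
    FeasibleP3 N t D Dv (averageAdjacent r (epochLength t) n) := by
  obtain ⟨hDv, hr0, hsent, hbudget⟩ := hfeas
  have hle := le_averageAdjacent_self hT'.le (add_pos hT hT') hr
  refine ⟨hDv, fun k hk ↦ ?_, fun j hj ↦ (hsent j hj).trans ?_, hbudget⟩
  · rcases eq_or_ne k n with rfl | hkn
    · exact (hr0 k hk).trans hle
    rcases eq_or_ne k (n + 1) with rfl | hkn'
    · rw [averageAdjacent_succ]
      exact (hr0 n (Finset.mem_Icc.2 ⟨hn, by grind⟩)).trans hle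
    · rw [averageAdjacent_of_ne hkn hkn']
      exact hr0 k hk
  · refine Finset.sum_le_sum_of_le_of_add_eq (i := n) (j := n + 1) (by omega)
      (fun h ↦ by grind) (fun k hkn hkn' ↦ by rw [averageAdjacent_of_ne hkn hkn'])
      (mul_le_mul_of_nonneg_right hle hT.le) (averageAdjacent_mul_add (add_pos hT hT').ne').symm

theorem mergedObjective_averageAdjacent_lt {N n : ℕ} {t : ℕ → ℝ} {B σ2 h α : ℝ}
    {a b d β c Dv r : ℕ → ℝ} (hB : 0 < B) (hσ2 : 0 < σ2) (hh : 0 < h) (hα : 0 < α)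
    (hn : 1 ≤ n) (hnN : n + 1 ≤ N) (hT : 0 < epochLength t n)
    (hT' : 0 < epochLength t (n + 1)) (hr : r n < r (n + 1)) :
    mergedObjective N t B σ2 h α a b d β c Dv (averageAdjacent r (epochLength t) n)
      < mergedObjective N t B σ2 h α a b d β c Dv r := by
  have hjensen := strictConvexOn_exp.mul_map_div_lt hT hT'
    (div_lt_div_of_pos_right hr hB).ne
  have havg : (r n / B * epochLength t n + r (n + 1) / B * epochLength t (n + 1))
      / (epochLength t n + epochLength t (n + 1))
      = averageAdjacent r (epochLength t) n n / B := by
    simp only [averageAdjacent, true_or, if_true]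
    ring
  rw [havg] at hjensen
  refine add_lt_add_left (mul_lt_mul_of_pos_left ?_ hα) _
  refine Finset.sum_lt_sum_of_add_lt (i := n) (j := n + 1) (by omega)
    (Finset.mem_Icc.2 ⟨hn, by omega⟩) (Finset.mem_Icc.2 ⟨by omega, hnN⟩)
    (fun k hkn hkn' ↦ by rw [averageAdjacent_of_ne hkn hkn']) ?_
  rw [averageAdjacent_succ]
  simp only [epochLength, Nat.add_sub_cancel] at hjensen ⊢
  linear_combination (σ2 / h) * hjensen

theorem merged_optimal_rates_nonincreasing_general
    (N : ℕ) (t : ℕ → ℝ) (B σ2 h D α : ℝ) (a b d β c : ℕ → ℝ)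
    (hB : 0 < B) (hσ2 : 0 < σ2) (hh : 0 < h) (hα : 0 < α)
    (ht : ∀ n, n < N → t n < t (n + 1))
    (Dstar rstar : ℕ → ℝ)
    (hfeas : FeasibleP3 N t D Dstar rstar)
    (hopt : ∀ Dv r, FeasibleP3 N t D Dv r →
      mergedObjective N t B σ2 h α a b d β c Dstar rstar
        ≤ mergedObjective N t B σ2 h α a b d β c Dv r) :
    ∀ n, 1 ≤ n → n + 1 ≤ N → rstar (n + 1) ≤ rstar n := by
  intro n hn hnN
  by_contra! hr
  have hT : 0 < epochLength t n := epochLength_pos ht hn (by omega)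
  have hT' : 0 < epochLength t (n + 1) := epochLength_pos ht (by omega) hnN
  exact (hopt Dstar _ (hfeas.averageAdjacent hn hT hT' hr.le)).not_gt
    (mergedObjective_averageAdjacent_lt hB hσ2 hh hα hn hnN hT hT' hr)

/-- Non-increasing rates also hold after objectives merging: if `(D*, r*)` is an
optimal solution of the merged problem (P3) with weight `α > 0`, then
`r*_{n+1} ≤ r*_n` for every `n = 1, …, N−1`. -/
theorem merged_optimal_rates_nonincreasing
    (N : ℕ) (t : ℕ → ℝ) (B σ2 h D α : ℝ) (a b d β c : ℕ → ℝ)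
    (hB : 0 < B) (hσ2 : 0 < σ2) (hh : 0 < h) (hD : 0 < D) (hα : 0 < α)
    (ht0 : t 0 = 0) (ht : ∀ n, n < N → t n < t (n + 1))
    (ha : ∀ n ∈ Finset.Icc 1 N, 0 < a n)
    (hb : ∀ n ∈ Finset.Icc 1 N, 0 < b n)
    (hd : ∀ n ∈ Finset.Icc 1 N, 0 < d n)
    (hβ : ∀ n ∈ Finset.Icc 1 N, 0 < β n)
    (hc : ∀ n ∈ Finset.Icc 1 N, 0 < c n)
    (Dstar rstar : ℕ → ℝ)
    (hfeas : FeasibleP3 N t D Dstar rstar)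
    (hopt : ∀ Dv r, FeasibleP3 N t D Dv r →
      mergedObjective N t B σ2 h α a b d β c Dstar rstar
        ≤ mergedObjective N t B σ2 h α a b d β c Dv r) :
    ∀ n, 1 ≤ n → n + 1 ≤ N → rstar (n + 1) ≤ rstar n :=
  merged_optimal_rates_nonincreasing_general N t B σ2 h D α a b d β c hB hσ2 hh hα ht Dstar rstar
    hfeas hopt
end

section
/- Lemma 3 (sub-optimality of data buffer overflow): Let D_max > 0, D_0 = 0, and 0 ≤ D_n ≤ D_max for n = 1, …, N. Given a rate vector r with r_n ≥ 0, define the clipped delivered-data curve Ĉ_0 = 0 and Ĉ_j = min(Ĉ_{j−1} + r_j T_j, ∑_{n=0}^{j−1} D_n + D_max) for j = 1, …, N. Suppose the policy effectively delivers the required data, Ĉ_j ≥ ∑_{n=1}^j D_n for all j, and suppose a buffer overflow occurs at some epoch j₀, i.e., Ĉ_{j₀−1} + r_{j₀} T_{j₀} > ∑_{n=0}^{j₀−1} D_n + D_max. Then the rate vector r' defined by r'_j = (Ĉ_j − Ĉ_{j−1})/T_j satisfies both the transmission constraints ∑_{n=1}^j r'_n T_n ≥ ∑_{n=1}^j D_n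 and the buffer constraints ∑_{n=1}^j r'_n T_n ≤ ∑_{n=0}^{j−1} D_n + D_max for every j, and its energy is strictly smaller: E(r') < E(r). Hence any policy yielding a data buffer overflow is strictly sub-optimal. -/
/-!
Clipping can only lower the data sent in an epoch, so the clipped rates `r'` are
componentwise at most `r`, and strictly smaller at the overflow epoch. Since the energy is
strictly increasing in each rate, `E(r') < E(r)`. The data delivered by `r'` telescopes to
the clipped curve `C` itself, which meets the demand by hypothesis and respects the buffer
capacity by its definition as a minimum.
-/

/-- Energy consumption of a rate vector `r` over the `N` epochs determined by the
task instants `t`, with epoch lengths `T n = t n − t (n−1)`. -/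
noncomputable def energyLB (B σ2 h : ℝ) (t : ℕ → ℝ) (N : ℕ) (r : ℕ → ℝ) : ℝ :=
  ∑ n ∈ Finset.Icc 1 N, (Real.exp (r n / B) - 1) * (σ2 / h) * (t n - t (n - 1))

open Finset

lemma epoch_length_pos {t : ℕ → ℝ} {N n : ℕ} (ht : ∀ k, k < N → t k < t (k + 1))
    (hn : n ∈ Icc 1 N) : 0 < t n - t (n - 1) := by
  rw [mem_Icc] at hn
  have := ht (n - 1) (by omega)
  rw [Nat.sub_add_cancel hn.1] at this
  linarith

lemma sum_Icc_one_sub_pred {M : Type*} [AddCommGroup M] (C : ℕ → M) (j : ℕ) :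
    ∑ n ∈ Icc 1 j, (C n - C (n - 1)) = C j - C 0 := by
  induction j with
  | zero => simp
  | succ k ih =>
    rw [sum_Icc_succ_top (by omega), ih, Nat.add_sub_cancel]
    abel

lemma sum_Icc_one_div_mul_eq {C t : ℕ → ℝ} {j : ℕ} (hC0 : C 0 = 0)
    (hT : ∀ n ∈ Icc 1 j, t n - t (n - 1) ≠ 0) :
    ∑ n ∈ Icc 1 j, (C n - C (n - 1)) / (t n - t (n - 1)) * (t n - t (n - 1)) = C j := by
  rw [sum_congr rfl fun n hn => div_mul_cancel₀ _ (hT n hn), sum_Icc_one_sub_pred, hC0,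
    sub_zero]

lemma clipped_rate_le {c c' x T cap : ℝ} (hT : 0 < T) (hc : c = min (c' + x * T) cap) :
    (c - c') / T ≤ x := by
  rw [div_le_iff₀ hT]
  linarith [hc ▸ min_le_left (c' + x * T) cap]

lemma clipped_rate_lt_of_overflow {c c' x T cap : ℝ} (hT : 0 < T)
    (hc : c = min (c' + x * T) cap) (hover : cap < c' + x * T) : (c - c') / T < x := by
  rw [div_lt_iff₀ hT]
  linarith [hc ▸ min_le_right (c' + x * T) cap]

lemma energyLB_lt_energyLB {B σ2 h : ℝ} {t : ℕ → ℝ} {N : ℕ} {r r' : ℕ → ℝ}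
    (hB : 0 < B) (hσ2 : 0 < σ2) (hh : 0 < h) (hT : ∀ n ∈ Icc 1 N, 0 < t n - t (n - 1))
    (hle : ∀ n ∈ Icc 1 N, r' n ≤ r n) (hlt : ∃ j ∈ Icc 1 N, r' j < r j) :
    energyLB B σ2 h t N r' < energyLB B σ2 h t N r := by
  apply sum_lt_sum
  · intro n hn
    have := hT n hn
    have := hle n hn
    gcongr
  · obtain ⟨j, hj, hrj⟩ := hlt
    refine ⟨j, hj, ?_⟩
    have := hT j hj
    gcongr

theorem buffer_overflow_suboptimal_general
    (N : ℕ) (t D r C : ℕ → ℝ) (B σ2 h Dmax : ℝ)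
    (hB : 0 < B) (hσ2 : 0 < σ2) (hh : 0 < h)
    (ht : ∀ n, n < N → t n < t (n + 1))
    -- clipped delivered-data curve
    (hC0 : C 0 = 0)
    (hC : ∀ j ∈ Finset.Icc 1 N,
      C j = min (C (j - 1) + r j * (t j - t (j - 1)))
              (∑ n ∈ Finset.range j, D n + Dmax))
    -- the policy effectively delivers the required data
    (hdeliver : ∀ j ∈ Finset.Icc 1 N, ∑ n ∈ Finset.Icc 1 j, D n ≤ C j)
    -- overflow occurs at epoch j₀
    (j0 : ℕ) (hj0 : j0 ∈ Finset.Icc 1 N)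
    (hoverflow : ∑ n ∈ Finset.range j0, D n + Dmax
      < C (j0 - 1) + r j0 * (t j0 - t (j0 - 1))) :
    (∀ j ∈ Finset.Icc 1 N,
      ∑ n ∈ Finset.Icc 1 j, D n
        ≤ ∑ n ∈ Finset.Icc 1 j, (C n - C (n - 1)) / (t n - t (n - 1)) * (t n - t (n - 1))) ∧
    (∀ j ∈ Finset.Icc 1 N,
      ∑ n ∈ Finset.Icc 1 j, (C n - C (n - 1)) / (t n - t (n - 1)) * (t n - t (n - 1))
        ≤ ∑ n ∈ Finset.range j, D n + Dmax) ∧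
    energyLB B σ2 h t N (fun n => (C n - C (n - 1)) / (t n - t (n - 1)))
      < energyLB B σ2 h t N r := by
  have hT (n) (hn : n ∈ Icc 1 N) := epoch_length_pos ht hn
  have hdelivered (j) (hj : j ∈ Icc 1 N) :
      ∑ n ∈ Icc 1 j, (C n - C (n - 1)) / (t n - t (n - 1)) * (t n - t (n - 1)) = C j :=
    sum_Icc_one_div_mul_eq hC0 fun n hn =>
      (hT n (Icc_subset_Icc_right (mem_Icc.1 hj).2 hn)).ne'
  refine ⟨fun j hj => ?_, fun j hj => ?_, ?_⟩
  · exact (hdelivered j hj).symm ▸ hdeliver j hj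
  · exact (hdelivered j hj).symm ▸ hC j hj ▸ min_le_right _ _
  · exact energyLB_lt_energyLB hB hσ2 hh hT (fun n hn => clipped_rate_le (hT n hn) (hC n hn))
      ⟨j0, hj0, clipped_rate_lt_of_overflow (hT j0 hj0) (hC j0 hj0) hoverflow⟩

/-- Lemma 3 (sub-optimality of data buffer overflow): if a rate vector `r` causes a
data buffer overflow at some epoch `j₀` (its delivered-data curve `C`, clipped at the
buffer capacity, still meets all the requirements), then the clipped policy
`r'_j = (C_j − C_{j−1})/T_j` is feasible for the limited-buffer problem (it satisfies
both the transmission and the buffer constraints) and consumes strictly less energy. -/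
theorem buffer_overflow_suboptimal
    (N : ℕ) (t D r C : ℕ → ℝ) (B σ2 h Dmax : ℝ)
    (hB : 0 < B) (hσ2 : 0 < σ2) (hh : 0 < h) (hDmax : 0 < Dmax)
    (ht0 : t 0 = 0) (ht : ∀ n, n < N → t n < t (n + 1))
    (hD0 : D 0 = 0)
    (hD : ∀ n ∈ Finset.Icc 1 N, 0 ≤ D n ∧ D n ≤ Dmax)
    (hr : ∀ n ∈ Finset.Icc 1 N, 0 ≤ r n)
    -- clipped delivered-data curve
    (hC0 : C 0 = 0)
    (hC : ∀ j ∈ Finset.Icc 1 N,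
      C j = min (C (j - 1) + r j * (t j - t (j - 1)))
              (∑ n ∈ Finset.range j, D n + Dmax))
    -- the policy effectively delivers the required data
    (hdeliver : ∀ j ∈ Finset.Icc 1 N, ∑ n ∈ Finset.Icc 1 j, D n ≤ C j)
    -- overflow occurs at epoch j₀
    (j0 : ℕ) (hj0 : j0 ∈ Finset.Icc 1 N)
    (hoverflow : ∑ n ∈ Finset.range j0, D n + Dmax
      < C (j0 - 1) + r j0 * (t j0 - t (j0 - 1))) :
    (∀ j ∈ Finset.Icc 1 N,
      ∑ n ∈ Finset.Icc 1 j, D n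
        ≤ ∑ n ∈ Finset.Icc 1 j, (C n - C (n - 1)) / (t n - t (n - 1)) * (t n - t (n - 1))) ∧
    (∀ j ∈ Finset.Icc 1 N,
      ∑ n ∈ Finset.Icc 1 j, (C n - C (n - 1)) / (t n - t (n - 1)) * (t n - t (n - 1))
        ≤ ∑ n ∈ Finset.range j, D n + Dmax) ∧
    energyLB B σ2 h t N (fun n => (C n - C (n - 1)) / (t n - t (n - 1)))
      < energyLB B σ2 h t N r :=
  buffer_overflow_suboptimal_general N t D r C B σ2 h Dmax hB hσ2 hh ht hC0 hC hdeliver j0 hj0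
    hoverflow
end

section
/- Lemma 4 (rate changing condition in the limited-buffer problem): Let r* be an optimal rate vector for the limited-buffer energy-minimization problem. If the transmission rate changes at instant t_j for some j ∈ {1, …, N−1}, i.e., r*_j ≠ r*_{j+1}, then at t_j the data buffer is either empty or full: either ∑_{n=1}^j r*_n T_n = ∑_{n=1}^j D_n or ∑_{n=1}^j r*_n T_n = ∑_{n=0}^{j−1} D_n + D_max. -/
/-- Feasibility for the limited-buffer problem: nonnegative rates satisfying both
the transmission constraints `∑_{n=1}^j r_n T_n ≥ ∑_{n=1}^j D_n` and the buffer
constraints `∑_{n=1}^j r_n T_n ≤ ∑_{n=0}^{j−1} D_n + D_max`, for all `j = 1, …, N`. -/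
def FeasibleLB (t D : ℕ → ℝ) (N : ℕ) (Dmax : ℝ) (r : ℕ → ℝ) : Prop :=
  (∀ n ∈ Finset.Icc 1 N, 0 ≤ r n) ∧
  (∀ j ∈ Finset.Icc 1 N,
    ∑ n ∈ Finset.Icc 1 j, D n ≤ ∑ n ∈ Finset.Icc 1 j, r n * (t n - t (n - 1))) ∧
  (∀ j ∈ Finset.Icc 1 N,
    ∑ n ∈ Finset.Icc 1 j, r n * (t n - t (n - 1)) ≤ ∑ n ∈ Finset.range j, D n + Dmax)

open Finset Filter Topology

lemma Real.exp_sub_exp_le_exp_mul_sub (u v : ℝ) :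
    Real.exp u - Real.exp v ≤ Real.exp u * (u - v) := by
  have hexp := Real.add_one_le_exp (v - u)
  have : Real.exp v = Real.exp u * Real.exp (v - u) := by rw [← Real.exp_add]; ring_nf
  nlinarith [Real.exp_pos u]

lemma sub_mul_sub_neg_of_strictMono {f : ℝ → ℝ} (hf : StrictMono f) {a b a' b' κ : ℝ}
    (hκ : 0 < κ) (hab : a ≠ b) (h : a' - b' = κ * (a - b)) : (b - a) * (f a' - f b') < 0 := by
  rcases hab.lt_or_gt with hlt | hgt
  · have : a' < b' := by nlinarith
    exact mul_neg_of_pos_of_neg (by linarith) (by linarith [hf this])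
  · have : b' < a' := by nlinarith
    exact mul_neg_of_neg_of_pos (by linarith) (by linarith [hf this])

lemma exists_pos_mul_lt_one_and_add_mul_mem_Ioo {c d lo hi x : ℝ} (hx : x ∈ Set.Ioo lo hi) :
    ∃ ε > 0, ε * c < 1 ∧ x + ε * d ∈ Set.Ioo lo hi := by
  have hc : Tendsto (fun ε => ε * c) (𝓝 0) (𝓝 0) :=
    (continuous_id.mul_const c).tendsto' 0 0 (zero_mul c)
  have hd : Tendsto (fun ε => x + ε * d) (𝓝 0) (𝓝 x) :=
    (continuous_const.add (continuous_id.mul_const d)).tendsto' 0 x (by simp)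
  have h := (hc.eventually (gt_mem_nhds one_pos)).and (hd.eventually (Ioo_mem_nhds hx.1 hx.2))
  obtain ⟨ε, hε, hpos⟩ :=
    ((h.filter_mono nhdsWithin_le_nhds).and (self_mem_nhdsWithin (s := Set.Ioi (0 : ℝ)))).exists
  exact ⟨ε, hpos, hε⟩

section Epochs

variable {t : ℕ → ℝ} {N : ℕ}

lemma epoch_pos (ht : ∀ n, n < N → t n < t (n + 1)) {n : ℕ} (hn : n ∈ Icc 1 N) :
    0 < t n - t (n - 1) := by
  obtain ⟨h1, hN⟩ := mem_Icc.mp hn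
  have := ht (n - 1) (by omega)
  rw [Nat.sub_add_cancel h1] at this
  linarith

lemma energyLB_sub_le {B σ2 h : ℝ} (hB : 0 < B) (hσh : 0 ≤ σ2 / h)
    (ht : ∀ n, n < N → t n < t (n + 1)) (r r' : ℕ → ℝ) :
    energyLB B σ2 h t N r' - energyLB B σ2 h t N r
      ≤ σ2 / h / B *
          ∑ n ∈ Icc 1 N, Real.exp (r' n / B) * ((r' n - r n) * (t n - t (n - 1))) := by
  unfold energyLB
  rw [← sum_sub_distrib, mul_sum]
  refine sum_le_sum fun n hn => ?_
  have hT := (epoch_pos ht hn).le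
  have hexp := Real.exp_sub_exp_le_exp_mul_sub (r' n / B) (r n / B)
  calc (Real.exp (r' n / B) - 1) * (σ2 / h) * (t n - t (n - 1))
        - (Real.exp (r n / B) - 1) * (σ2 / h) * (t n - t (n - 1))
      = σ2 / h * (t n - t (n - 1)) * (Real.exp (r' n / B) - Real.exp (r n / B)) := by ring
    _ ≤ σ2 / h * (t n - t (n - 1)) * (Real.exp (r' n / B) * (r' n / B - r n / B)) := by gcongr
    _ = _ := by field_simp

end Epochs

/-- The rates obtained from `r` when `δ` bits of data sent in epoch `j + 1` are sent in
epoch `j` instead (or, for `δ < 0`, the other way round). -/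
noncomputable def shiftData (t r : ℕ → ℝ) (j : ℕ) (δ : ℝ) (n : ℕ) : ℝ :=
  r n + (if n = j then δ / (t j - t (j - 1)) else 0)
    - (if n = j + 1 then δ / (t (j + 1) - t j) else 0)

section ShiftData

variable {t r : ℕ → ℝ} {j : ℕ} {δ : ℝ}

@[simp] lemma shiftData_self : shiftData t r j δ j = r j + δ / (t j - t (j - 1)) := by
  simp [shiftData]

@[simp] lemma shiftData_succ :
    shiftData t r j δ (j + 1) = r (j + 1) - δ / (t (j + 1) - t j) := by
  simp [shiftData]

lemma shiftData_of_ne {n : ℕ} (h₁ : n ≠ j) (h₂ : n ≠ j + 1) :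
    shiftData t r j δ n = r n := by
  simp [shiftData, h₁, h₂]

lemma shiftData_sub_mul (hT₁ : t j - t (j - 1) ≠ 0) (hT₂ : t (j + 1) - t j ≠ 0) (n : ℕ) :
    (shiftData t r j δ n - r n) * (t n - t (n - 1))
      = (if n = j then δ else 0) - (if n = j + 1 then δ else 0) := by
  by_cases h₁ : n = j
  · subst h₁; simp [hT₁]
  by_cases h₂ : n = j + 1
  · subst h₂; simp [hT₂]
  simp [shiftData_of_ne h₁ h₂, h₁, h₂]

lemma sum_Icc_shiftData_mul (hj : 1 ≤ j) (hT₁ : t j - t (j - 1) ≠ 0)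
    (hT₂ : t (j + 1) - t j ≠ 0) (k : ℕ) :
    ∑ n ∈ Icc 1 k, shiftData t r j δ n * (t n - t (n - 1))
      = ∑ n ∈ Icc 1 k, r n * (t n - t (n - 1)) + if k = j then δ else 0 := by
  have h (n : ℕ) : shiftData t r j δ n * (t n - t (n - 1)) = r n * (t n - t (n - 1))
      + ((if n = j then δ else 0) - (if n = j + 1 then δ else 0)) := by
    rw [← shiftData_sub_mul hT₁ hT₂]; ring
  simp only [h, sum_add_distrib, sum_sub_distrib, sum_ite_eq', mem_Icc]
  congr 1
  split_ifs <;> first | (exfalso; omega) | ring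

lemma energyLB_shiftData_sub_le {B σ2 h : ℝ} {N : ℕ} (hB : 0 < B) (hσh : 0 ≤ σ2 / h)
    (ht : ∀ n, n < N → t n < t (n + 1)) (hj : 1 ≤ j) (hjN : j + 1 ≤ N) :
    energyLB B σ2 h t N (shiftData t r j δ) - energyLB B σ2 h t N r
      ≤ σ2 / h / B * (δ * (Real.exp (shiftData t r j δ j / B)
          - Real.exp (shiftData t r j δ (j + 1) / B))) := by
  have hjm : j ∈ Icc 1 N := mem_Icc.mpr ⟨hj, by omega⟩
  have hj1m : j + 1 ∈ Icc 1 N := mem_Icc.mpr ⟨by omega, hjN⟩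
  have hT₁ := (epoch_pos ht hjm).ne'
  have hT₂ := (epoch_pos ht hj1m).ne'
  simp only [Nat.add_sub_cancel] at hT₂
  refine (energyLB_sub_le hB hσh ht r _).trans_eq ?_
  simp only [shiftData_sub_mul hT₁ hT₂, mul_sub, mul_ite, mul_zero, sum_sub_distrib,
    sum_ite_eq', hjm, hj1m, if_true]
  ring

lemma feasibleLB_shiftData {D : ℕ → ℝ} {N : ℕ} {Dmax : ℝ}
    (hfeas : FeasibleLB t D N Dmax r) (hj : 1 ≤ j)
    (hT₁ : t j - t (j - 1) ≠ 0) (hT₂ : t (j + 1) - t j ≠ 0)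
    (hpos₁ : 0 ≤ shiftData t r j δ j) (hpos₂ : 0 ≤ shiftData t r j δ (j + 1))
    (hlow : ∑ n ∈ Icc 1 j, D n ≤ ∑ n ∈ Icc 1 j, r n * (t n - t (n - 1)) + δ)
    (hhigh : ∑ n ∈ Icc 1 j, r n * (t n - t (n - 1)) + δ ≤ ∑ n ∈ range j, D n + Dmax) :
    FeasibleLB t D N Dmax (shiftData t r j δ) := by
  obtain ⟨hr, htr, hbuf⟩ := hfeas
  refine ⟨fun n hn => ?_, fun k hk => ?_, fun k hk => ?_⟩
  · by_cases h₁ : n = j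
    · rwa [h₁]
    by_cases h₂ : n = j + 1
    · rwa [h₂]
    rw [shiftData_of_ne h₁ h₂]; exact hr n hn
  · rw [sum_Icc_shiftData_mul hj hT₁ hT₂]
    split_ifs with hkj
    · rwa [hkj]
    · simpa using htr k hk
  · rw [sum_Icc_shiftData_mul hj hT₁ hT₂]
    split_ifs with hkj
    · rwa [hkj]
    · simpa using hbuf k hk

/-- Both new rates are convex combinations of `r j` and `r (j + 1)`. -/
lemma shiftData_nonneg_of_small (hT₁ : 0 < t j - t (j - 1)) (hT₂ : 0 < t (j + 1) - t j)
    {ε : ℝ} (hε : 0 < ε) (hsmall : ε / (t j - t (j - 1)) + ε / (t (j + 1) - t j) < 1)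
    (ha : 0 ≤ r j) (hb : 0 ≤ r (j + 1)) :
    0 ≤ shiftData t r j (ε * (r (j + 1) - r j)) j ∧
      0 ≤ shiftData t r j (ε * (r (j + 1) - r j)) (j + 1) := by
  have hε₁ := div_pos hε hT₁
  have hε₂ := div_pos hε hT₂
  rw [shiftData_self, shiftData_succ]
  constructor
  · calc 0 ≤ (1 - ε / (t j - t (j - 1))) * r j + ε / (t j - t (j - 1)) * r (j + 1) :=
          add_nonneg (mul_nonneg (by linarith) ha) (mul_nonneg hε₁.le hb)
      _ = _ := by ring
  · calc 0 ≤ (1 - ε / (t (j + 1) - t j)) * r (j + 1) + ε / (t (j + 1) - t j) * r j :=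
          add_nonneg (mul_nonneg (by linarith) hb) (mul_nonneg hε₂.le ha)
      _ = _ := by ring

lemma energyLB_shiftData_lt {B σ2 h ε : ℝ} {N : ℕ} (hB : 0 < B) (hσh : 0 < σ2 / h)
    (ht : ∀ n, n < N → t n < t (n + 1)) (hj : 1 ≤ j) (hjN : j + 1 ≤ N) (hε : 0 < ε)
    (hsmall : ε / (t j - t (j - 1)) + ε / (t (j + 1) - t j) < 1) (hne : r j ≠ r (j + 1)) :
    energyLB B σ2 h t N (shiftData t r j (ε * (r (j + 1) - r j))) < energyLB B σ2 h t N r := by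
  set r' := shiftData t r j (ε * (r (j + 1) - r j))
  have hgap : r' j - r' (j + 1)
      = (1 - ε / (t j - t (j - 1)) - ε / (t (j + 1) - t j)) * (r j - r (j + 1)) := by
    simp only [r', shiftData_self, shiftData_succ]; ring
  have hgain : (r (j + 1) - r j) * (Real.exp (r' j / B) - Real.exp (r' (j + 1) / B)) < 0 :=
    sub_mul_sub_neg_of_strictMono (Real.exp_strictMono.comp (strictMono_div_right_of_pos hB))
      (by linarith) hne hgap
  have hE := energyLB_shiftData_sub_le (r := r) (δ := ε * (r (j + 1) - r j))
    hB hσh.le ht hj hjN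
  have hc : 0 < σ2 / h / B * ε := by positivity
  linarith [mul_neg_of_pos_of_neg hc hgain]

end ShiftData

theorem rate_change_condition_limited_buffer_general
    (N : ℕ) (t D rstar : ℕ → ℝ) (B σ2 h Dmax : ℝ)
    (hB : 0 < B) (hσ2 : 0 < σ2) (hh : 0 < h)
    (ht : ∀ n, n < N → t n < t (n + 1))
    (hfeas : FeasibleLB t D N Dmax rstar)
    (hopt : ∀ r, FeasibleLB t D N Dmax r →
      energyLB B σ2 h t N rstar ≤ energyLB B σ2 h t N r)
    (j : ℕ) (hj1 : 1 ≤ j) (hjN : j + 1 ≤ N)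
    (hchange : rstar j ≠ rstar (j + 1)) :
    (∑ n ∈ Finset.Icc 1 j, rstar n * (t n - t (n - 1)) = ∑ n ∈ Finset.Icc 1 j, D n) ∨
    (∑ n ∈ Finset.Icc 1 j, rstar n * (t n - t (n - 1))
      = ∑ n ∈ Finset.range j, D n + Dmax) := by
  by_contra! hcon
  have hjm : j ∈ Icc 1 N := mem_Icc.mpr ⟨hj1, by omega⟩
  have hj1m : j + 1 ∈ Icc 1 N := mem_Icc.mpr ⟨by omega, hjN⟩
  have hslack : ∑ n ∈ Icc 1 j, rstar n * (t n - t (n - 1))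
      ∈ Set.Ioo (∑ n ∈ Icc 1 j, D n) (∑ n ∈ range j, D n + Dmax) :=
    ⟨(hfeas.2.1 j hjm).lt_of_ne hcon.1.symm, (hfeas.2.2 j hjm).lt_of_ne hcon.2⟩
  have hT₁ : 0 < t j - t (j - 1) := epoch_pos ht hjm
  have hT₂ : 0 < t (j + 1) - t j := by simpa only [Nat.add_sub_cancel] using epoch_pos ht hj1m
  obtain ⟨ε, hε, hsmall, hlow, hhigh⟩ := exists_pos_mul_lt_one_and_add_mul_mem_Ioo
    (c := 1 / (t j - t (j - 1)) + 1 / (t (j + 1) - t j)) (d := rstar (j + 1) - rstar j) hslack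
  replace hsmall : ε / (t j - t (j - 1)) + ε / (t (j + 1) - t j) < 1 := by
    convert hsmall using 1; ring
  obtain ⟨hpos₁, hpos₂⟩ := shiftData_nonneg_of_small hT₁ hT₂ hε hsmall
    (hfeas.1 j hjm) (hfeas.1 (j + 1) hj1m)
  have hfeas' := feasibleLB_shiftData hfeas hj1 hT₁.ne' hT₂.ne' hpos₁ hpos₂ hlow.le hhigh.le
  exact (hopt _ hfeas').not_gt
    (energyLB_shiftData_lt hB (div_pos hσ2 hh) ht hj1 hjN hε hsmall hchange)

/-- Lemma 4 (rate changing condition in the limited-buffer problem): under an optimal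
rate vector, if the transmission rate changes at the instant `t_j`
(`r*_j ≠ r*_{j+1}`), then at `t_j` the data buffer is either empty or full. -/
theorem rate_change_condition_limited_buffer
    (N : ℕ) (t D rstar : ℕ → ℝ) (B σ2 h Dmax : ℝ)
    (hB : 0 < B) (hσ2 : 0 < σ2) (hh : 0 < h) (hDmax : 0 < Dmax)
    (ht0 : t 0 = 0) (ht : ∀ n, n < N → t n < t (n + 1))
    (hD0 : D 0 = 0)
    (hD : ∀ n ∈ Finset.Icc 1 N, 0 ≤ D n ∧ D n ≤ Dmax)
    (hfeas : FeasibleLB t D N Dmax rstar)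
    (hopt : ∀ r, FeasibleLB t D N Dmax r →
      energyLB B σ2 h t N rstar ≤ energyLB B σ2 h t N r)
    (j : ℕ) (hj1 : 1 ≤ j) (hjN : j + 1 ≤ N)
    (hchange : rstar j ≠ rstar (j + 1)) :
    (∑ n ∈ Finset.Icc 1 j, rstar n * (t n - t (n - 1)) = ∑ n ∈ Finset.Icc 1 j, D n) ∨
    (∑ n ∈ Finset.Icc 1 j, rstar n * (t n - t (n - 1))
      = ∑ n ∈ Finset.range j, D n + Dmax) :=
  rate_change_condition_limited_buffer_general N t D rstar B σ2 h Dmax hB hσ2 hh ht hfeas hopt j hj1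
    hjN hchange
end

section
/- Lemma 5 (rate changing direction in the limited-buffer problem): Let r* be an optimal rate vector for the limited-buffer energy-minimization problem, and let j ∈ {1, …, N−1}. If the rate decreases at t_j, i.e., r*_{j+1} < r*_j, then the data buffer is empty at t_j: ∑_{n=1}^j r*_n T_n = ∑_{n=1}^j D_n. If the rate increases at t_j, i.e., r*_{j+1} > r*_j, then the data buffer is full at t_j: ∑_{n=1}^j r*_n T_n = ∑_{n=0}^{j−1} D_n + D_max. -/
open Real Finset Filter Topology

lemma HasDerivAt.eventually_nhdsLT_lt {f : ℝ → ℝ} {f' x : ℝ} (hf : HasDerivAt f f' x)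
    (hf' : 0 < f') : ∀ᶠ y in 𝓝[<] x, f y < f x := by
  filter_upwards [nhdsLT_le_nhdsNE x <|
      (hasDerivAt_iff_tendsto_slope.mp hf).eventually (eventually_gt_nhds hf'),
    self_mem_nhdsWithin] with y hslope hy
  exact (slope_pos_iff_gt hy).mp hslope

lemma HasDerivAt.eventually_nhdsGT_lt {f : ℝ → ℝ} {f' x : ℝ} (hf : HasDerivAt f f' x)
    (hf' : f' < 0) : ∀ᶠ y in 𝓝[>] x, f y < f x := by
  filter_upwards [nhdsGT_le_nhdsNE x <|
      (hasDerivAt_iff_tendsto_slope.mp hf).eventually (eventually_lt_nhds hf'),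
    self_mem_nhdsWithin] with y hslope hy
  exact (slope_neg_iff_of_le (le_of_lt hy)).mp hslope

section Transfer

variable (t : ℕ → ℝ) (j : ℕ)

/-- Adding `ε • transferDir t j` to a rate vector moves `ε` bits from epoch `j + 1` into
epoch `j`. -/
noncomputable def transferDir : ℕ → ℝ :=
  Pi.single j (1 / (t j - t (j - 1))) - Pi.single (j + 1) (1 / (t (j + 1) - t j))

variable {t j}

lemma sum_transferDir_mul (s : Finset ℕ) (w : ℕ → ℝ) :
    ∑ n ∈ s, transferDir t j n * w n =
      (if j ∈ s then w j / (t j - t (j - 1)) else 0)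
        - (if j + 1 ∈ s then w (j + 1) / (t (j + 1) - t j) else 0) := by
  simp [transferDir, Pi.single_apply, sub_mul, sum_sub_distrib, div_eq_inv_mul]

lemma transferDir_apply_self : transferDir t j j = 1 / (t j - t (j - 1)) := by
  simp [transferDir]

lemma transferDir_apply_succ : transferDir t j (j + 1) = -(1 / (t (j + 1) - t j)) := by
  simp [transferDir]

lemma transferDir_apply_of_ne {n : ℕ} (hnj : n ≠ j) (hnj1 : n ≠ j + 1) :
    transferDir t j n = 0 := by
  simp [transferDir, hnj, hnj1]

lemma sum_Icc_add_smul_transferDir_mul (r : ℕ → ℝ) (ε : ℝ) (hj : 1 ≤ j)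
    (hTj : t j - t (j - 1) ≠ 0) (hTj1 : t (j + 1) - t j ≠ 0) (k : ℕ) :
    ∑ n ∈ Icc 1 k, (r + ε • transferDir t j) n * (t n - t (n - 1)) =
      ∑ n ∈ Icc 1 k, r n * (t n - t (n - 1)) + if k = j then ε else 0 := by
  have hdir :
      ∑ n ∈ Icc 1 k, transferDir t j n * (t n - t (n - 1)) = if k = j then 1 else 0 := by
    rw [sum_transferDir_mul]
    simp only [mem_Icc, Nat.add_sub_cancel, div_self hTj, div_self hTj1]
    split_ifs <;> first | (exfalso; omega) | norm_num
  simp only [Pi.add_apply, Pi.smul_apply, smul_eq_mul, add_mul, mul_assoc, sum_add_distrib,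
    ← mul_sum, hdir, mul_ite, mul_one, mul_zero]

lemma FeasibleLB.add_smul_transferDir {D r : ℕ → ℝ} {N : ℕ} {Dmax ε : ℝ}
    (hr : FeasibleLB t D N Dmax r) (hj : 1 ≤ j)
    (hTj : t j - t (j - 1) ≠ 0) (hTj1 : t (j + 1) - t j ≠ 0)
    (hrj : 0 ≤ r j + ε / (t j - t (j - 1))) (hrj1 : 0 ≤ r (j + 1) - ε / (t (j + 1) - t j))
    (hD : ∑ n ∈ Icc 1 j, D n ≤ ∑ n ∈ Icc 1 j, r n * (t n - t (n - 1)) + ε)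
    (hbuf : ∑ n ∈ Icc 1 j, r n * (t n - t (n - 1)) + ε ≤ ∑ n ∈ range j, D n + Dmax) :
    FeasibleLB t D N Dmax (r + ε • transferDir t j) := by
  obtain ⟨hr0, hrD, hrbuf⟩ := hr
  refine ⟨fun n hn => ?_, fun k hk => ?_, fun k hk => ?_⟩
  · simp only [Pi.add_apply, Pi.smul_apply, smul_eq_mul]
    by_cases hnj : n = j
    · rwa [hnj, transferDir_apply_self, mul_one_div]
    by_cases hnj1 : n = j + 1
    · rwa [hnj1, transferDir_apply_succ, mul_neg, mul_one_div, ← sub_eq_add_neg]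
    simpa [transferDir_apply_of_ne hnj hnj1] using hr0 n hn
  · rw [sum_Icc_add_smul_transferDir_mul r ε hj hTj hTj1 k]
    split_ifs with hkj
    · rwa [hkj]
    · simpa using hrD k hk
  · rw [sum_Icc_add_smul_transferDir_mul r ε hj hTj hTj1 k]
    split_ifs with hkj
    · rwa [hkj]
    · simpa using hrbuf k hk

lemma hasDerivAt_energyLB_add_smul_transferDir (B σ2 h : ℝ) (N : ℕ) (r : ℕ → ℝ)
    (hj : 1 ≤ j) (hjN : j + 1 ≤ N)
    (hTj : t j - t (j - 1) ≠ 0) (hTj1 : t (j + 1) - t j ≠ 0) :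
    HasDerivAt (fun ε : ℝ => energyLB B σ2 h t N (r + ε • transferDir t j))
      (σ2 / h / B * (exp (r j / B) - exp (r (j + 1) / B))) 0 := by
  have hterm : ∀ n, HasDerivAt
      (fun ε : ℝ =>
        (exp ((r + ε • transferDir t j) n / B) - 1) * (σ2 / h) * (t n - t (n - 1)))
      (transferDir t j n * (exp (r n / B) / B * (σ2 / h) * (t n - t (n - 1)))) 0 := fun n => by
    refine (((((hasDerivAt_id (0 : ℝ)).mul_const (transferDir t j n)).const_add (r n)).div_const
      B).exp.sub_const 1).mul_const (σ2 / h) |>.mul_const (t n - t (n - 1)) |>.congr_deriv ?_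
    simp only [id, zero_mul, add_zero, one_mul]
    ring
  refine (HasDerivAt.fun_sum fun n _ => hterm n).congr_deriv ?_
  rw [sum_transferDir_mul]
  simp only [mem_Icc, Nat.add_sub_cancel]
  rw [if_pos ⟨hj, by omega⟩, if_pos ⟨by omega, hjN⟩]
  field_simp

lemma FeasibleLB.eventually_nhdsLT_add_smul_transferDir {D r : ℕ → ℝ} {N : ℕ} {Dmax : ℝ}
    (hr : FeasibleLB t D N Dmax r) (hj : 1 ≤ j) (hjN : j + 1 ≤ N)
    (hTj : 0 < t j - t (j - 1)) (hTj1 : 0 < t (j + 1) - t j) (hrj : 0 < r j)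
    (hempty : ∑ n ∈ Icc 1 j, D n < ∑ n ∈ Icc 1 j, r n * (t n - t (n - 1))) :
    ∀ᶠ ε in 𝓝[<] (0 : ℝ), FeasibleLB t D N Dmax (r + ε • transferDir t j) := by
  have hjN' : j ∈ Icc 1 N := mem_Icc.mpr ⟨hj, by omega⟩
  have hrj1 : 0 ≤ r (j + 1) := hr.1 (j + 1) (mem_Icc.mpr ⟨by omega, hjN⟩)
  have hbuf := hr.2.2 j hjN'
  have h0 : ∀ᶠ ε in 𝓝 (0 : ℝ), 0 ≤ r j + ε / (t j - t (j - 1)) :=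
    ((continuous_const.add (continuous_id.div_const _)).tendsto' 0 (r j)
      (by simp)).eventually_const_le hrj
  have hD : ∀ᶠ ε in 𝓝 (0 : ℝ),
      ∑ n ∈ Icc 1 j, D n ≤ ∑ n ∈ Icc 1 j, r n * (t n - t (n - 1)) + ε :=
    ((continuous_const.add continuous_id).tendsto' 0 _ (by simp)).eventually_const_le hempty
  filter_upwards [eventually_nhdsWithin_of_eventually_nhds h0,
    eventually_nhdsWithin_of_eventually_nhds hD, self_mem_nhdsWithin] with ε h0 hD (hε : ε < 0)
  refine hr.add_smul_transferDir hj hTj.ne' hTj1.ne' h0 ?_ hD (by linarith)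
  have : ε / (t (j + 1) - t j) < 0 := div_neg_of_neg_of_pos hε hTj1
  linarith

lemma FeasibleLB.eventually_nhdsGT_add_smul_transferDir {D r : ℕ → ℝ} {N : ℕ} {Dmax : ℝ}
    (hr : FeasibleLB t D N Dmax r) (hj : 1 ≤ j) (hjN : j + 1 ≤ N)
    (hTj : 0 < t j - t (j - 1)) (hTj1 : 0 < t (j + 1) - t j) (hrj1 : 0 < r (j + 1))
    (hfull : ∑ n ∈ Icc 1 j, r n * (t n - t (n - 1)) < ∑ n ∈ range j, D n + Dmax) :
    ∀ᶠ ε in 𝓝[>] (0 : ℝ), FeasibleLB t D N Dmax (r + ε • transferDir t j) := by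
  have hjN' : j ∈ Icc 1 N := mem_Icc.mpr ⟨hj, by omega⟩
  have hrj : 0 ≤ r j := hr.1 j hjN'
  have hD := hr.2.1 j hjN'
  have h0 : ∀ᶠ ε in 𝓝 (0 : ℝ), 0 ≤ r (j + 1) - ε / (t (j + 1) - t j) :=
    ((continuous_const.sub (continuous_id.div_const _)).tendsto' 0 (r (j + 1))
      (by simp)).eventually_const_le hrj1
  have hbuf : ∀ᶠ ε in 𝓝 (0 : ℝ),
      ∑ n ∈ Icc 1 j, r n * (t n - t (n - 1)) + ε ≤ ∑ n ∈ range j, D n + Dmax :=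
    ((continuous_const.add continuous_id).tendsto' 0 _ (by simp)).eventually_le_const hfull
  filter_upwards [eventually_nhdsWithin_of_eventually_nhds h0,
    eventually_nhdsWithin_of_eventually_nhds hbuf, self_mem_nhdsWithin]
    with ε h0 hbuf (hε : 0 < ε)
  refine hr.add_smul_transferDir hj hTj.ne' hTj1.ne' ?_ h0 (by linarith) hbuf
  have : 0 < ε / (t j - t (j - 1)) := div_pos hε hTj
  linarith

end Transfer

theorem rate_change_direction_limited_buffer_general
    (N : ℕ) (t D rstar : ℕ → ℝ) (B σ2 h Dmax : ℝ)
    (hB : 0 < B) (hσ2 : 0 < σ2) (hh : 0 < h)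
    (ht : ∀ n, n < N → t n < t (n + 1))
    (hfeas : FeasibleLB t D N Dmax rstar)
    (hopt : ∀ r, FeasibleLB t D N Dmax r →
      energyLB B σ2 h t N rstar ≤ energyLB B σ2 h t N r)
    (j : ℕ) (hj1 : 1 ≤ j) (hjN : j + 1 ≤ N) :
    (rstar (j + 1) < rstar j →
      ∑ n ∈ Finset.Icc 1 j, rstar n * (t n - t (n - 1)) = ∑ n ∈ Finset.Icc 1 j, D n) ∧
    (rstar j < rstar (j + 1) →
      ∑ n ∈ Finset.Icc 1 j, rstar n * (t n - t (n - 1))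
        = ∑ n ∈ Finset.range j, D n + Dmax) := by
  have hTj : 0 < t j - t (j - 1) :=
    sub_pos.2 (by simpa [Nat.sub_add_cancel hj1] using ht (j - 1) (by omega))
  have hTj1 : 0 < t (j + 1) - t j := sub_pos.2 (ht j (by omega))
  have hjN' : j ∈ Icc 1 N := mem_Icc.mpr ⟨hj1, by omega⟩
  have hE := hasDerivAt_energyLB_add_smul_transferDir B σ2 h N rstar hj1 hjN hTj.ne' hTj1.ne'
  have hc : 0 < σ2 / h / B := by positivity
  constructor
  · intro hlt
    by_contra hne
    have hlower := hE.eventually_nhdsLT_lt <|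
      mul_pos hc (sub_pos.2 (exp_lt_exp.2 ((div_lt_div_iff_of_pos_right hB).2 hlt)))
    have hfeasible := hfeas.eventually_nhdsLT_add_smul_transferDir hj1 hjN hTj hTj1
      ((hfeas.1 (j + 1) (mem_Icc.mpr ⟨by omega, hjN⟩)).trans_lt hlt)
      ((hfeas.2.1 j hjN').lt_of_ne (Ne.symm hne))
    obtain ⟨ε, hεlt, hεfeas⟩ := (hlower.and hfeasible).exists
    rw [zero_smul, add_zero] at hεlt
    exact (hopt _ hεfeas).not_gt hεlt
  · intro hlt
    by_contra hne
    have hlower := hE.eventually_nhdsGT_lt <|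
      mul_neg_of_pos_of_neg hc (sub_neg.2 (exp_lt_exp.2 ((div_lt_div_iff_of_pos_right hB).2 hlt)))
    have hfeasible := hfeas.eventually_nhdsGT_add_smul_transferDir hj1 hjN hTj hTj1
      ((hfeas.1 j hjN').trans_lt hlt) ((hfeas.2.2 j hjN').lt_of_ne hne)
    obtain ⟨ε, hεlt, hεfeas⟩ := (hlower.and hfeasible).exists
    rw [zero_smul, add_zero] at hεlt
    exact (hopt _ hεfeas).not_gt hεlt

/-- Lemma 5 (rate changing direction in the limited-buffer problem): under an optimal
rate vector, the rate can decrease at `t_j` only if the buffer is empty at `t_j`, and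
it can increase at `t_j` only if the buffer is full at `t_j`. -/
theorem rate_change_direction_limited_buffer
    (N : ℕ) (t D rstar : ℕ → ℝ) (B σ2 h Dmax : ℝ)
    (hB : 0 < B) (hσ2 : 0 < σ2) (hh : 0 < h) (hDmax : 0 < Dmax)
    (ht0 : t 0 = 0) (ht : ∀ n, n < N → t n < t (n + 1))
    (hD0 : D 0 = 0)
    (hD : ∀ n ∈ Finset.Icc 1 N, 0 ≤ D n ∧ D n ≤ Dmax)
    (hfeas : FeasibleLB t D N Dmax rstar)
    (hopt : ∀ r, FeasibleLB t D N Dmax r →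
      energyLB B σ2 h t N rstar ≤ energyLB B σ2 h t N r)
    (j : ℕ) (hj1 : 1 ≤ j) (hjN : j + 1 ≤ N) :
    (rstar (j + 1) < rstar j →
      ∑ n ∈ Finset.Icc 1 j, rstar n * (t n - t (n - 1)) = ∑ n ∈ Finset.Icc 1 j, D n) ∧
    (rstar j < rstar (j + 1) →
      ∑ n ∈ Finset.Icc 1 j, rstar n * (t n - t (n - 1))
        = ∑ n ∈ Finset.range j, D n + Dmax) :=
  rate_change_direction_limited_buffer_general N t D rstar B σ2 h Dmax hB hσ2 hh ht hfeas hopt j hj1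
    hjN
end

section
/- Rate changing conditions in the bursty-data-arrival problem (P6b): Consider instants 0 = t_0 < t_1 < ⋯ < t_M with segment lengths T_m = t_m − t_{m−1}, required cumulative data amounts R_1 ≤ R_2 ≤ ⋯ ≤ R_M (data transmission lower bounds) and arrived cumulative data amounts A_1 ≤ A_2 ≤ ⋯ ≤ A_M with R_m ≤ A_m (data arrival upper bounds). A rate vector r = (r_1, …, r_M), r_m ≥ 0, is feasible if R_m ≤ ∑_{k=1}^m r_k T_k ≤ A_m for every m = 1, …, M, and its energy is E(r) = ∑_{m=1}^M (e^{r_m/B} − 1)(σ²/h) T_m with B, σ², h > 0. Let r* be a feasible rate vector minimizing E over all feasible rate vectors, and let m ∈ {1, …, M−1}. If r*_{m+1} < r*_m, then the transmission constraint is tight at t_m: ∑_{k=1}^m r*_k T_k = R_m (the server's data buffer is empty). If r*_{m+1} > r*_m, then the arrival constraint is tight at t_m: ∑_{k=1}^m r*_k T_k = A_m (all data so far collected by the sensor has been transmitted). -/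
/-!
If the rate drops at `t_m` while the transmission constraint at `t_m` is slack, move a small
amount of data from segment `m` to segment `m + 1`: of all cumulative constraints only the one at
`t_m` changes, and since the two new rates lie strictly between the old ones, strict convexity of
`r ↦ e^{r/B}` makes the energy strictly smaller, contradicting optimality. A rise with a slack
arrival constraint is handled by moving data the other way.
-/

/-- Energy consumption of a rate vector `r` over the `M` segments determined by the
instants `t`, with segment lengths `T m = t m − t (m−1)`. -/
noncomputable def energyBDA (B σ2 h : ℝ) (t : ℕ → ℝ) (M : ℕ) (r : ℕ → ℝ) : ℝ :=
  ∑ m ∈ Finset.Icc 1 M, (Real.exp (r m / B) - 1) * (σ2 / h) * (t m - t (m - 1))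

/-- Feasibility for the bursty-data-arrival problem (P6b): nonnegative rates whose
cumulative transmitted data lies between the required cumulative data `R_m`
(transmission lower bounds) and the arrived cumulative data `A_m`
(arrival upper bounds) at every instant `t_m`. -/
def FeasibleBDA (t R A : ℕ → ℝ) (M : ℕ) (r : ℕ → ℝ) : Prop :=
  (∀ m ∈ Finset.Icc 1 M, 0 ≤ r m) ∧
  (∀ m ∈ Finset.Icc 1 M,
    R m ≤ ∑ k ∈ Finset.Icc 1 m, r k * (t k - t (k - 1)) ∧
    ∑ k ∈ Finset.Icc 1 m, r k * (t k - t (k - 1)) ≤ A m)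

open Finset Real

section Slope

variable {𝕜 : Type*} [Field 𝕜] [LinearOrder 𝕜] [IsStrictOrderedRing 𝕜] {s : Set 𝕜}
  {f : 𝕜 → 𝕜} {a b x y u v : 𝕜}

theorem StrictConvexOn.mul_add_mul_lt_of_mem_Ioo (hf : StrictConvexOn 𝕜 s f) (hx : x ∈ s)
    (hy : y ∈ s) (ha : 0 < a) (hb : 0 < b) (hu : u ∈ Set.Ioo y x) (hv : v ∈ Set.Ioo y x)
    (hmass : a * u + b * v = a * x + b * y) :
    a * f u + b * f v < a * f x + b * f y := by
  obtain ⟨hyu, hux⟩ := hu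
  obtain ⟨hyv, hvx⟩ := hv
  have hIcc : Set.Icc y x ⊆ s := hf.1.ordConnected.out hy hx
  have hslope : (f v - f y) / (v - y) < (f u - f x) / (u - x) :=
    calc (f v - f y) / (v - y) < (f x - f y) / (x - y) :=
          hf.secant_strict_mono hy (hIcc ⟨hyv.le, hvx.le⟩) hx hyv.ne' (hyv.trans hvx).ne' hvx
      _ = (f y - f x) / (y - x) := by rw [← neg_div_neg_eq, neg_sub, neg_sub]
      _ < (f u - f x) / (u - x) :=
          hf.secant_strict_mono hx hy (hIcc ⟨hyu.le, hux.le⟩) (hyu.trans hux).ne hux.ne hyu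
  -- the claim is `b (f v - f y) < a (f x - f u)`; both sides are `b (v - y) = a (x - u)` times
  -- a secant slope
  have hδ : b * (v - y) = a * (x - u) := by linear_combination hmass
  have hleft : b * (f v - f y) = b * (v - y) * ((f v - f y) / (v - y)) := by
    field_simp [(sub_pos.2 hyv).ne']
  have hright : a * (f x - f u) = b * (v - y) * ((f u - f x) / (u - x)) := by
    rw [hδ]; field_simp [(sub_neg.2 hux).ne]; ring
  have := mul_lt_mul_of_pos_left hslope (mul_pos hb (sub_pos.2 hyv))
  linarith

theorem exists_mem_Ioo_transfer (ha : 0 < a) (hb : 0 < b) (hyx : y < x) {c : 𝕜} (hc : 0 < c) :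
    ∃ u v, u ∈ Set.Ioo y x ∧ v ∈ Set.Ioo y x ∧ a * u + b * v = a * x + b * y ∧
      a * (x - u) ≤ c := by
  set δ := min c (min a b * (x - y) / 2)
  have hxy : 0 < x - y := sub_pos.2 hyx
  have hδ : 0 < δ := lt_min hc (by have := lt_min ha hb; positivity)
  have hδ' : δ < min a b * (x - y) :=
    (min_le_right _ _).trans_lt (half_lt_self (by have := lt_min ha hb; positivity))
  have hδa : δ < a * (x - y) :=
    hδ'.trans_le (mul_le_mul_of_nonneg_right (min_le_left a b) hxy.le)
  have hδb : δ < b * (x - y) :=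
    hδ'.trans_le (mul_le_mul_of_nonneg_right (min_le_right a b) hxy.le)
  refine ⟨x - δ / a, y + δ / b, ⟨?_, ?_⟩, ⟨?_, ?_⟩, ?_, ?_⟩
  · rw [lt_sub_comm, div_lt_iff₀ ha]; linarith
  · linarith [div_pos hδ ha]
  · linarith [div_pos hδ hb]
  · rw [← lt_sub_iff_add_lt', div_lt_iff₀ hb]; linarith
  · field_simp; ring
  · rw [sub_sub_cancel, mul_div_cancel₀ _ ha.ne']; exact min_le_left _ _

end Slope

theorem strictConvexOn_exp_div {B : ℝ} (hB : 0 < B) :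
    StrictConvexOn ℝ Set.univ (fun x => exp (x / B)) := by
  refine ⟨convex_univ, fun x _ y _ hxy a b ha hb hab => ?_⟩
  have hne : x / B ≠ y / B := fun h => hxy ((div_left_inj' hB.ne').1 h)
  have := strictConvexOn_exp.2 (Set.mem_univ (x / B)) (Set.mem_univ (y / B)) hne ha hb hab
  simpa only [smul_eq_mul, add_div, mul_div_assoc] using this

theorem Finset.sum_lt_sum_of_eq_off_pair {ι G : Type*} [DecidableEq ι] [AddCommMonoid G]
    [PartialOrder G] [IsOrderedCancelAddMonoid G] {s : Finset ι} {f g : ι → G} {i j : ι}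
    (hi : i ∈ s) (hj : j ∈ s) (hij : i ≠ j) (hoff : ∀ k, k ≠ i → k ≠ j → f k = g k)
    (hlt : f i + f j < g i + g j) :
    ∑ k ∈ s, f k < ∑ k ∈ s, g k := by
  have hj' : j ∈ s.erase i := mem_erase.2 ⟨hij.symm, hj⟩
  rw [← add_sum_erase s f hi, ← add_sum_erase _ f hj', ← add_sum_erase s g hi,
    ← add_sum_erase _ g hj', ← add_assoc, ← add_assoc,
    sum_congr rfl fun k hk => hoff k (ne_of_mem_erase (mem_of_mem_erase hk)) (ne_of_mem_erase hk)]
  exact add_lt_add_left hlt _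

theorem Finset.sum_Icc_eq_of_transfer {G : Type*} [AddCommGroup G] {g g' : ℕ → G} {m : ℕ}
    (hm : 1 ≤ m) (hoff : ∀ k, k ≠ m → k ≠ m + 1 → g' k = g k)
    (hpair : g' m + g' (m + 1) = g m + g (m + 1)) (n : ℕ) :
    ∑ k ∈ Icc 1 n, g' k = ∑ k ∈ Icc 1 n, g k + if n = m then g' m - g m else 0 := by
  induction n with
  | zero => simp [show 0 ≠ m by omega]
  | succ n ih =>
    rw [sum_Icc_succ_top (by omega), sum_Icc_succ_top (by omega), ih]
    rcases eq_or_ne (n + 1) m with rfl | hnm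
    · simp
    rcases eq_or_ne n m with rfl | hn
    · rw [if_pos rfl, if_neg hnm, add_zero, add_assoc, sub_add_eq_add_sub, hpair]
      abel
    · rw [if_neg hn, if_neg hnm, hoff (n + 1) hnm (by omega), add_zero, add_zero]

section Rates

variable {t R A r : ℕ → ℝ} {M m : ℕ} {u v : ℝ}

def reallocate (r : ℕ → ℝ) (m : ℕ) (u v : ℝ) : ℕ → ℝ :=
  Function.update (Function.update r m u) (m + 1) v

@[simp] theorem reallocate_apply_left : reallocate r m u v m = u := by simp [reallocate]

@[simp] theorem reallocate_apply_right : reallocate r m u v (m + 1) = v := by simp [reallocate]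

theorem reallocate_apply_of_ne {k : ℕ} (h₁ : k ≠ m) (h₂ : k ≠ m + 1) :
    reallocate r m u v k = r k := by
  simp [reallocate, h₁, h₂]

theorem sum_Icc_reallocate (hm : 1 ≤ m)
    (hmass : u * (t m - t (m - 1)) + v * (t (m + 1) - t m) =
      r m * (t m - t (m - 1)) + r (m + 1) * (t (m + 1) - t m)) (n : ℕ) :
    ∑ k ∈ Icc 1 n, reallocate r m u v k * (t k - t (k - 1)) =
      ∑ k ∈ Icc 1 n, r k * (t k - t (k - 1)) +
        if n = m then (u - r m) * (t m - t (m - 1)) else 0 := by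
  rw [sum_Icc_eq_of_transfer hm (fun k h₁ h₂ => by rw [reallocate_apply_of_ne h₁ h₂])
    (by simpa using hmass) n]
  simp [sub_mul]

theorem FeasibleBDA.reallocate (hr : FeasibleBDA t R A M r) (hm : 1 ≤ m) (hu : 0 ≤ u)
    (hv : 0 ≤ v)
    (hmass : u * (t m - t (m - 1)) + v * (t (m + 1) - t m) =
      r m * (t m - t (m - 1)) + r (m + 1) * (t (m + 1) - t m))
    (hR : R m ≤ ∑ k ∈ Icc 1 m, r k * (t k - t (k - 1)) + (u - r m) * (t m - t (m - 1)))
    (hA : ∑ k ∈ Icc 1 m, r k * (t k - t (k - 1)) + (u - r m) * (t m - t (m - 1)) ≤ A m) :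
    FeasibleBDA t R A M (reallocate r m u v) := by
  refine ⟨fun k hk => ?_, fun n hn => ?_⟩
  · rcases eq_or_ne k m with rfl | h₁
    · simpa
    rcases eq_or_ne k (m + 1) with rfl | h₂
    · simpa
    rw [reallocate_apply_of_ne h₁ h₂]
    exact hr.1 k hk
  · rw [sum_Icc_reallocate hm hmass]
    rcases eq_or_ne n m with rfl | hnm
    · simpa using ⟨hR, hA⟩
    · simpa [hnm] using hr.2 n hn

theorem energyBDA_reallocate_lt {B σ2 h : ℝ} (hσ2 : 0 < σ2) (hh : 0 < h) (hm : 1 ≤ m)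
    (hmM : m + 1 ≤ M)
    (hlt : (t m - t (m - 1)) * exp (u / B) + (t (m + 1) - t m) * exp (v / B) <
      (t m - t (m - 1)) * exp (r m / B) + (t (m + 1) - t m) * exp (r (m + 1) / B)) :
    energyBDA B σ2 h t M (reallocate r m u v) < energyBDA B σ2 h t M r := by
  refine sum_lt_sum_of_eq_off_pair (i := m) (j := m + 1) (mem_Icc.2 ⟨hm, by omega⟩)
    (mem_Icc.2 ⟨by omega, hmM⟩) (by omega)
    (fun k h₁ h₂ => by rw [reallocate_apply_of_ne h₁ h₂]) ?_
  simp only [reallocate_apply_left, reallocate_apply_right, add_tsub_cancel_right]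
  linear_combination (σ2 / h) * hlt

theorem segmentPairCost_le_of_optimal {B σ2 h : ℝ} (hσ2 : 0 < σ2) (hh : 0 < h)
    (hr : FeasibleBDA t R A M r)
    (hopt : ∀ r', FeasibleBDA t R A M r' → energyBDA B σ2 h t M r ≤ energyBDA B σ2 h t M r')
    (hm : 1 ≤ m) (hmM : m + 1 ≤ M) (hu : 0 ≤ u) (hv : 0 ≤ v)
    (hmass : u * (t m - t (m - 1)) + v * (t (m + 1) - t m) =
      r m * (t m - t (m - 1)) + r (m + 1) * (t (m + 1) - t m))
    (hR : R m ≤ ∑ k ∈ Icc 1 m, r k * (t k - t (k - 1)) + (u - r m) * (t m - t (m - 1)))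
    (hA : ∑ k ∈ Icc 1 m, r k * (t k - t (k - 1)) + (u - r m) * (t m - t (m - 1)) ≤ A m) :
    (t m - t (m - 1)) * exp (r m / B) + (t (m + 1) - t m) * exp (r (m + 1) / B) ≤
      (t m - t (m - 1)) * exp (u / B) + (t (m + 1) - t m) * exp (v / B) :=
  le_of_not_gt fun hlt => (hopt _ (hr.reallocate hm hu hv hmass hR hA)).not_gt
    (energyBDA_reallocate_lt hσ2 hh hm hmM hlt)

end Rates

theorem rate_change_conditions_bursty_arrival_general
    (M : ℕ) (t R A rstar : ℕ → ℝ) (B σ2 h : ℝ)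
    (hB : 0 < B) (hσ2 : 0 < σ2) (hh : 0 < h)
    (ht : ∀ m, m < M → t m < t (m + 1))
    (hfeas : FeasibleBDA t R A M rstar)
    (hopt : ∀ r, FeasibleBDA t R A M r →
      energyBDA B σ2 h t M rstar ≤ energyBDA B σ2 h t M r)
    (m : ℕ) (hm1 : 1 ≤ m) (hmM : m + 1 ≤ M) :
    (rstar (m + 1) < rstar m →
      ∑ k ∈ Finset.Icc 1 m, rstar k * (t k - t (k - 1)) = R m) ∧
    (rstar m < rstar (m + 1) →
      ∑ k ∈ Finset.Icc 1 m, rstar k * (t k - t (k - 1)) = A m) := by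
  have hT : 0 < t m - t (m - 1) := by
    have := ht (m - 1) (by omega)
    rw [Nat.sub_add_cancel hm1] at this
    linarith
  have hT' : 0 < t (m + 1) - t m := sub_pos.2 (ht m (by omega))
  have hexp := strictConvexOn_exp_div hB
  have hr₀ := hfeas.1 m (mem_Icc.2 ⟨hm1, by omega⟩)
  have hr₁ := hfeas.1 (m + 1) (mem_Icc.2 ⟨by omega, hmM⟩)
  obtain ⟨hR, hA⟩ := hfeas.2 m (mem_Icc.2 ⟨hm1, by omega⟩)
  refine ⟨fun hdec => le_antisymm ?_ hR, fun hinc => le_antisymm hA ?_⟩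
  · by_contra! hslack
    obtain ⟨u, v, hu, hv, hmass, hshift⟩ :=
      exists_mem_Ioo_transfer hT hT' hdec (sub_pos.2 hslack)
    have hcost := segmentPairCost_le_of_optimal hσ2 hh hfeas hopt hm1 hmM (hr₁.trans hu.1.le)
      (hr₁.trans hv.1.le) (by linarith) (by linarith) (by nlinarith [hu.2])
    exact hcost.not_gt
      (hexp.mul_add_mul_lt_of_mem_Ioo (Set.mem_univ _) (Set.mem_univ _) hT hT' hu hv hmass)
  · by_contra! hslack
    obtain ⟨u, v, hu, hv, hmass, hshift⟩ :=
      exists_mem_Ioo_transfer hT' hT hinc (sub_pos.2 hslack)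
    have hcost := segmentPairCost_le_of_optimal hσ2 hh hfeas hopt hm1 hmM (hr₀.trans hv.1.le)
      (hr₀.trans hu.1.le) (by linarith) (by nlinarith [hv.1]) (by linarith)
    linarith [hexp.mul_add_mul_lt_of_mem_Ioo (Set.mem_univ _) (Set.mem_univ _) hT' hT hu hv
      hmass]

/-- Rate changing conditions in the bursty-data-arrival problem (P6b): under an
optimal rate vector, the rate can decrease at `t_m` only if the transmission
constraint is tight there (the server's data buffer is empty), and it can increase
at `t_m` only if the arrival constraint is tight there (all data so far collected
by the sensor has been transmitted). -/
theorem rate_change_conditions_bursty_arrival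
    (M : ℕ) (t R A rstar : ℕ → ℝ) (B σ2 h : ℝ)
    (hB : 0 < B) (hσ2 : 0 < σ2) (hh : 0 < h)
    (ht0 : t 0 = 0) (ht : ∀ m, m < M → t m < t (m + 1))
    (hR_mono : ∀ m, 1 ≤ m → m + 1 ≤ M → R m ≤ R (m + 1))
    (hA_mono : ∀ m, 1 ≤ m → m + 1 ≤ M → A m ≤ A (m + 1))
    (hRA : ∀ m ∈ Finset.Icc 1 M, R m ≤ A m)
    (hfeas : FeasibleBDA t R A M rstar)
    (hopt : ∀ r, FeasibleBDA t R A M r →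
      energyBDA B σ2 h t M rstar ≤ energyBDA B σ2 h t M r)
    (m : ℕ) (hm1 : 1 ≤ m) (hmM : m + 1 ≤ M) :
    (rstar (m + 1) < rstar m →
      ∑ k ∈ Finset.Icc 1 m, rstar k * (t k - t (k - 1)) = R m) ∧
    (rstar m < rstar (m + 1) →
      ∑ k ∈ Finset.Icc 1 m, rstar k * (t k - t (k - 1)) = A m) :=
  rate_change_conditions_bursty_arrival_general M t R A rstar B σ2 h hB hσ2 hh ht hfeas hopt m hm1
    hmM
end
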